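/- arXiv:2505.12823 — 7 statements merged into one kernel-verified Lean document; each statement's English description precedes it below -/
import Mathlib

section
/- Any splicing of two 3-connected cubic graphs is again cubic and 3-connected. -/
open SimpleGraph Set

/-- A graph is cubic (3-regular) if every vertex has exactly 3 neighbours. -/
def IsCubic {V : Type*} (G : SimpleGraph V) : Prop := ∀ v : V, (G.neighborSet v).ncard = 3

/-- `G` is `k`-connected: more than `k` vertices, and deleting fewer than `k`
vertices leaves a connected graph. -/
def KConnected {V : Type*} (k : ℕ) (G : SimpleGraph V) : Prop :=
  k < Nat.card V ∧ ∀ S : Finset V, S.card < k → (G.induce ((↑S : Set V)ᶜ)).Connected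

/-- `G` has a perfect matching. -/
def Matchable {V : Type*} (G : SimpleGraph V) : Prop :=
  ∃ M : G.Subgraph, M.IsPerfectMatching

/-- `G` is matching covered: connected, of order at least two, and every edge
lies in some perfect matching. -/
def MatchingCovered {V : Type*} (G : SimpleGraph V) : Prop :=
  G.Connected ∧ 2 ≤ Nat.card V ∧
    ∀ e ∈ G.edgeSet, ∃ M : G.Subgraph, M.IsPerfectMatching ∧ e ∈ M.edgeSet

/-- The cut `∂(X)`: edges of `G` with one end in `X` and the other outside `X`. -/
def cutEdges {V : Type*} (G : SimpleGraph V) (X : Set V) : Set (Sym2 V) :=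
  {e | e ∈ G.edgeSet ∧ ∃ u v : V, e = s(u, v) ∧ u ∈ X ∧ v ∉ X}

/-- `A`, `B` form a bipartition of `G`. -/
def IsBipartitionOf {V : Type*} (G : SimpleGraph V) (A B : Set V) : Prop :=
  A ∪ B = Set.univ ∧ Disjoint A B ∧
    ∀ u v : V, G.Adj u v → ((u ∈ A ∧ v ∈ B) ∨ (u ∈ B ∧ v ∈ A))

/-- Number of odd components of `G − B`. -/
noncomputable def coddRemove {V : Type*} (G : SimpleGraph V) (B : Set V) : ℕ :=
  Nat.card {c : (G.induce Bᶜ).ConnectedComponent // Odd c.supp.ncard}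

/-- `B` is a barrier of `G`. -/
def IsBarrier {V : Type*} (G : SimpleGraph V) (B : Set V) : Prop :=
  coddRemove G B = B.ncard

/-- `v` is λ-matchable in `G`: there is a spanning subgraph in which `v` has
degree three and every other vertex has degree one. -/
def IsLambdaMatchable {V : Type*} (G : SimpleGraph V) (v : V) : Prop :=
  ∃ M : G.Subgraph, M.IsSpanning ∧ (M.neighborSet v).ncard = 3 ∧
    ∀ u : V, u ≠ v → (M.neighborSet u).ncard = 1

/-- The pair `(a, b)` is λ-matchable in `G`. -/
def IsLambdaMatchablePair {V : Type*} (G : SimpleGraph V) (a b : V) : Prop :=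
  ∃ M : G.Subgraph, M.IsSpanning ∧ (M.neighborSet a).ncard = 3 ∧ (M.neighborSet b).ncard = 3 ∧
    ∀ u : V, u ≠ a → u ≠ b → (M.neighborSet u).ncard = 1

/-- `G` is a tight cut. -/
def IsTightCut {V : Type*} (G : SimpleGraph V) (X : Set V) : Prop :=
  ∀ M : G.Subgraph, M.IsPerfectMatching → (M.edgeSet ∩ cutEdges G X).ncard = 1

/-- The contraction of `G` obtained by shrinking the complement of `X` to a
single (contraction) vertex, represented by `none`. -/
def contractOut {V : Type*} (G : SimpleGraph V) (X : Set V) : SimpleGraph (Option ↥X) :=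
  SimpleGraph.fromRel fun p q =>
    match p, q with
    | some a, some b => G.Adj a.1 b.1
    | some a, none => ∃ w : V, w ∉ X ∧ G.Adj a.1 w
    | none, _ => False

/-- Neighborhood of a set. -/
def setNbhd {V : Type*} (G : SimpleGraph V) (A' : Set V) : Set V :=
  {v | ∃ a ∈ A', G.Adj a v}

/-- The marked `C`-component on shore `X`, with the marker edge joining `u₁`, `u₂`. -/
def markedComp {V : Type*} (H : SimpleGraph V) (X : Set V) (u₁ u₂ : V) : SimpleGraph ↥X :=
  SimpleGraph.fromRel fun a b => H.Adj a.1 b.1 ∨ (a.1 = u₁ ∧ b.1 = u₂)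

/-- The splicing of `G` at `u` with `H` at `v` with respect to the bijection
`π` between the edges (equivalently, neighbours) at `u` and at `v`. -/
def splice {V W : Type*} (G : SimpleGraph V) (H : SimpleGraph W) (u : V) (v : W)
    (π : ↥(G.neighborSet u) ≃ ↥(H.neighborSet v)) :
    SimpleGraph ({x : V // x ≠ u} ⊕ {y : W // y ≠ v}) :=
  SimpleGraph.fromRel fun p q =>
    match p, q with
    | Sum.inl a, Sum.inl b => G.Adj a.1 b.1
    | Sum.inl a, Sum.inr b => ∃ h : G.Adj u a.1, ((π ⟨a.1, h⟩ : ↥(H.neighborSet v)) : W) = b.1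
    | Sum.inr a, Sum.inr b => H.Adj a.1 b.1
    | Sum.inr _, Sum.inl _ => False

/-!
Let `S` be a set of at most two vertices of the splice. Since `u` has three neighbours, some edge
`a π(a)` joining the two sides survives in the splice minus `S`. If at most one vertex of `S` lies
in `G - u`, deleting it together with `u` leaves `G` connected, so every surviving vertex of
`G - u` is joined to `a`. Otherwise both vertices of `S` lie in `G - u`: a path in `G - S` from a
vertex to `u` enters `u` through a neighbour `c`, and the edge `c π(c)` leads into `H - v`, which
is intact and connected. Splicing is symmetric, so the same holds with `G` and `H` exchanged.
Degrees are preserved because `π` matches the edges at `u` with the edges at `v`.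
-/

open Finset

theorem exists_notMem_and_notMem_of_injective {α β γ : Type*} {f : α → β} {g : α → γ}
    (hf : f.Injective) (hg : g.Injective) (s : Finset β) (t : Finset γ)
    (h : #s + #t < Nat.card α) : ∃ a, f a ∉ s ∧ g a ∉ t := by
  have : Finite α := Nat.finite_of_card_ne_zero (by omega)
  by_contra! hcover
  have hsub : (Set.univ : Set α) ⊆ f ⁻¹' s ∪ g ⁻¹' t :=
    fun a _ => or_iff_not_imp_left.2 (hcover a)
  have := calc Nat.card α = (Set.univ : Set α).ncard := (Set.ncard_univ α).symm
    _ ≤ (f ⁻¹' s ∪ g ⁻¹' t).ncard := Set.ncard_le_ncard hsub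
    _ ≤ (f ⁻¹' s).ncard + (g ⁻¹' t).ncard := Set.ncard_union_le _ _
    _ ≤ #s + #t := by
      gcongr
      · exact (Set.ncard_le_ncard_of_injOn (t := ↑s) f (fun a ha => ha) hf.injOn).trans_eq
          (Set.ncard_coe_finset s)
      · exact (Set.ncard_le_ncard_of_injOn (t := ↑t) g (fun a ha => ha) hg.injOn).trans_eq
          (Set.ncard_coe_finset t)
  omega

theorem Nat.card_subtype_ne_add_one {α : Type*} [Finite α] (a : α) :
    Nat.card {x // x ≠ a} + 1 = Nat.card α := by
  rw [← Set.ncard_add_ncard_compl {a}, Set.ncard_singleton, add_comm, ← Nat.card_coe_set_eq]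
  rfl

theorem Finset.swap_mem_compl_map_sumComm_iff {α β : Type*} {S : Finset (α ⊕ β)}
    {p : α ⊕ β} :
    p.swap ∈ (↑(S.map (Equiv.sumComm α β).toEmbedding) : Set (β ⊕ α))ᶜ ↔
      p ∈ (↑S : Set (α ⊕ β))ᶜ := by
  simp only [Set.mem_compl_iff, Finset.mem_coe, Finset.mem_map_equiv, Equiv.sumComm_symm,
    Equiv.sumComm_apply, Sum.swap_swap]

namespace SimpleGraph

variable {α : Type*} {Γ : SimpleGraph α} {s : Set α}

theorem Walk.exists_adj_reachable_induce_diff_singleton {x z : α} (w : Γ.Walk x z)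
    (hw : ∀ y ∈ w.support, y ∈ s) (hxz : x ≠ z) :
    ∃ c, Γ.Adj c z ∧ ∃ (hx : x ∈ s \ {z}) (hc : c ∈ s \ {z}),
      (Γ.induce (s \ {z})).Reachable ⟨x, hx⟩ ⟨c, hc⟩ := by
  induction w with
  | nil => exact absurd rfl hxz
  | @cons x y z hxy w ih =>
    have hx : x ∈ s \ {z} := ⟨hw x (by simp), hxz⟩
    by_cases hyz : y = z
    · subst hyz
      exact ⟨x, hxy, hx, hx, .rfl⟩
    · obtain ⟨c, hcz, hy, hc, hyc⟩ := ih (fun y hy => hw y (by simp [hy])) hyz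
      have hxy' : (Γ.induce (s \ {z})).Adj ⟨x, hx⟩ ⟨y, hy⟩ := induce_adj.2 hxy
      exact ⟨c, hcz, hx, hc, hxy'.reachable.trans hyc⟩

theorem Reachable.exists_adj_reachable_induce_diff_singleton {x z : α} {hx : x ∈ s}
    {hz : z ∈ s} (h : (Γ.induce s).Reachable ⟨x, hx⟩ ⟨z, hz⟩) (hxz : x ≠ z) :
    ∃ c, Γ.Adj c z ∧ ∃ (hx : x ∈ s \ {z}) (hc : c ∈ s \ {z}),
      (Γ.induce (s \ {z})).Reachable ⟨x, hx⟩ ⟨c, hc⟩ := by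
  obtain ⟨w⟩ := h
  refine (w.map (Embedding.induce s).toHom).exists_adj_reachable_induce_diff_singleton ?_ hxz
  intro y hy
  obtain ⟨y, -, rfl⟩ := List.mem_map.1 (Walk.support_map _ w ▸ hy)
  exact y.2

end SimpleGraph

section Splice

variable {V W : Type*} {G : SimpleGraph V} {H : SimpleGraph W} {u : V} {v : W}
  {π : ↥(G.neighborSet u) ≃ ↥(H.neighborSet v)}

@[simp]
theorem splice_adj_inl_inl {a b : {x : V // x ≠ u}} :
    (splice G H u v π).Adj (.inl a) (.inl b) ↔ G.Adj a b := by
  simp only [splice, fromRel_adj, ne_eq, Sum.inl.injEq, or_iff_left_of_imp G.adj_symm,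
    and_iff_right_iff_imp]
  exact fun h hab => h.ne (congrArg Subtype.val hab)

@[simp]
theorem splice_adj_inr_inr {a b : {y : W // y ≠ v}} :
    (splice G H u v π).Adj (.inr a) (.inr b) ↔ H.Adj a b := by
  simp only [splice, fromRel_adj, ne_eq, Sum.inr.injEq, or_iff_left_of_imp H.adj_symm,
    and_iff_right_iff_imp]
  exact fun h hab => h.ne (congrArg Subtype.val hab)

@[simp]
theorem splice_adj_inl_inr {a : {x : V // x ≠ u}} {b : {y : W // y ≠ v}} :
    (splice G H u v π).Adj (.inl a) (.inr b) ↔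
      ∃ (ha : G.Adj u a) (hb : H.Adj v b), π ⟨a, ha⟩ = ⟨b, hb⟩ := by
  simp only [splice, fromRel_adj, ne_eq, reduceCtorEq, not_false_eq_true, or_false, true_and]
  exact ⟨fun ⟨ha, hab⟩ => ⟨ha, hab ▸ (π _).2, Subtype.ext hab⟩,
    fun ⟨ha, _, hab⟩ => ⟨ha, congrArg Subtype.val hab⟩⟩

@[simp]
theorem splice_adj_inr_inl {a : {x : V // x ≠ u}} {b : {y : W // y ≠ v}} :
    (splice G H u v π).Adj (.inr b) (.inl a) ↔
      ∃ (ha : G.Adj u a) (hb : H.Adj v b), π ⟨a, ha⟩ = ⟨b, hb⟩ := by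
  rw [SimpleGraph.adj_comm, splice_adj_inl_inr]

def spliceComm : splice G H u v π ≃g splice H G v u π.symm where
  toEquiv := Equiv.sumComm _ _
  map_rel_iff' {p q} := by
    rcases p with a | b <;> rcases q with a' | b' <;>
      simp only [Equiv.sumComm_apply, Sum.swap_inl, Sum.swap_inr, splice_adj_inl_inl,
        splice_adj_inr_inr, splice_adj_inl_inr, splice_adj_inr_inl, Equiv.eq_symm_apply,
        eq_comm] <;>
      exact exists_comm

theorem splice_ncard_neighborSet_inl (a : {x : V // x ≠ u}) :
    ((splice G H u v π).neighborSet (.inl a)).ncard = (G.neighborSet a).ncard := by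
  classical
  refine (Set.ncard_congr (fun w (hw : G.Adj a w) =>
      if h : w = u then Sum.inr ⟨π ⟨a, (h ▸ hw).symm⟩, (π _).2.ne'⟩
      else Sum.inl ⟨w, h⟩) ?_ ?_ ?_).symm
  · intro w hw
    split_ifs with h
    · subst h
      exact splice_adj_inl_inr.2 ⟨_, _, rfl⟩
    · exact splice_adj_inl_inl (π := π).2 hw
  · intro w w' hw hw' h
    split_ifs at h with h₁ h₂ h₂
    · exact h₁.trans h₂.symm
    all_goals simp_all
  · rintro (b | b) hb
    · exact ⟨b, splice_adj_inl_inl (π := π).1 hb, by simp [b.2]⟩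
    · obtain ⟨ha, hb', hab⟩ := splice_adj_inl_inr.1 hb
      exact ⟨u, ha.symm, by simp [hab]⟩

theorem IsCubic.splice (hG : IsCubic G) (hH : IsCubic H) : IsCubic (splice G H u v π)
  | .inl a => (splice_ncard_neighborSet_inl a).trans (hG a)
  | .inr b => by
    rw [← Nat.card_coe_set_eq, Nat.card_congr (spliceComm.mapNeighborSet (.inr b)),
      Nat.card_coe_set_eq]
    exact (splice_ncard_neighborSet_inl b).trans (hH b)

def spliceInlHom (S : Finset ({x : V // x ≠ u} ⊕ {y : W // y ≠ v})) (s : Set V)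
    (hs : ∀ x ∈ s, ∃ h : x ≠ u, .inl ⟨x, h⟩ ∉ S) :
    G.induce s →g (splice G H u v π).induce (↑S)ᶜ where
  toFun x := ⟨.inl ⟨x, (hs x x.2).fst⟩, (hs x x.2).snd⟩
  map_rel' h := splice_adj_inl_inl (π := π).2 h

theorem splice_induce_reachable_of_swap {S : Finset ({x : V // x ≠ u} ⊕ {y : W // y ≠ v})}
    {p q : {x : V // x ≠ u} ⊕ {y : W // y ≠ v}} {hp : p ∉ S} {hq : q ∉ S}
    (h : ((splice H G v u π.symm).induce (↑(S.map (Equiv.sumComm _ _).toEmbedding))ᶜ).Reachable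
      ⟨p.swap, Finset.swap_mem_compl_map_sumComm_iff.2 hp⟩
      ⟨q.swap, Finset.swap_mem_compl_map_sumComm_iff.2 hq⟩) :
    ((splice G H u v π).induce (↑S)ᶜ).Reachable ⟨p, hp⟩ ⟨q, hq⟩ := by
  have hmaps : Set.MapsTo (spliceComm (π := π)).symm
      (↑(S.map (Equiv.sumComm _ _).toEmbedding))ᶜ (↑S)ᶜ := fun p hp => by
    rw [← Finset.swap_mem_compl_map_sumComm_iff]
    simpa [spliceComm] using hp
  convert h.map (induceHom (spliceComm (π := π)).symm.toHom hmaps) <;>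
    exact (Sum.swap_swap _).symm

theorem splice_induce_reachable_inl_inl (hG : KConnected 3 G)
    {S : Finset ({x : V // x ≠ u} ⊕ {y : W // y ≠ v})} (hS : #S.toLeft ≤ 1)
    {x y : {x : V // x ≠ u}} (hx : .inl x ∉ S) (hy : .inl y ∉ S) :
    ((splice G H u v π).induce (↑S)ᶜ).Reachable ⟨.inl x, hx⟩ ⟨.inl y, hy⟩ := by
  classical
  set D : Finset V := insert u (S.toLeft.map (.subtype _))
  have hD : ∀ z ∈ (↑D : Set V)ᶜ, ∃ h : z ≠ u, .inl ⟨z, h⟩ ∉ S := by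
    intro z hz
    simp only [D, Finset.coe_insert, Finset.coe_map, Set.mem_compl_iff, Set.mem_insert_iff,
      not_or] at hz
    exact ⟨hz.1, fun h => hz.2 ⟨⟨z, hz.1⟩, mem_toLeft.2 h, rfl⟩⟩
  have hmem {z : {x : V // x ≠ u}} (hz : .inl z ∉ S) : z.1 ∈ (↑D : Set V)ᶜ := by
    simp [D, z.2, hz]
  have hconn := hG.2 D <| (Finset.card_insert_le _ _).trans_lt <| by rw [card_map]; omega
  exact (hconn.preconnected ⟨x, hmem hx⟩ ⟨y, hmem hy⟩).map (spliceInlHom S _ hD)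

theorem splice_induce_exists_reachable_inl_inr (hG : KConnected 3 G)
    {S : Finset ({x : V // x ≠ u} ⊕ {y : W // y ≠ v})} (hS : #S.toLeft ≤ 2)
    (hSr : S.toRight = ∅) {x : {x : V // x ≠ u}} (hx : .inl x ∉ S) :
    ∃ (y : {y : W // y ≠ v}) (hy : .inr y ∉ S),
      ((splice G H u v π).induce (↑S)ᶜ).Reachable ⟨.inl x, hx⟩ ⟨.inr y, hy⟩ := by
  set D : Finset V := S.toLeft.map (.subtype _)
  have hmem {z : V} (hz : ∀ h : z ≠ u, .inl ⟨z, h⟩ ∉ S) : z ∈ (↑D : Set V)ᶜ := by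
    simpa [D] using hz
  have hD : ∀ z ∈ (↑D : Set V)ᶜ \ {u}, ∃ h : z ≠ u, .inl ⟨z, h⟩ ∉ S := by
    rintro z ⟨hz, hzu⟩
    exact ⟨hzu, fun h => hz (Finset.mem_map.2 ⟨⟨z, hzu⟩, mem_toLeft.2 h, rfl⟩)⟩
  have hconn := hG.2 D <| by rw [card_map]; omega
  obtain ⟨c, hcu, _, _, hxc⟩ :=
    (hconn.preconnected ⟨x, hmem fun _ => hx⟩ ⟨u, hmem fun h => (h rfl).elim⟩
      ).exists_adj_reachable_induce_diff_singleton x.2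
  have hc : .inr ⟨π ⟨c, hcu.symm⟩, (π _).2.ne'⟩ ∉ S := fun h => by
    simpa [hSr] using mem_toRight.2 h
  refine ⟨_, hc, (hxc.map (spliceInlHom S _ hD)).trans (Adj.reachable ?_)⟩
  exact splice_adj_inl_inr.2 ⟨hcu.symm, _, rfl⟩

theorem splice_induce_reachable_inl_of_adj (hG : KConnected 3 G) (hH : KConnected 3 H)
    {S : Finset ({x : V // x ≠ u} ⊕ {y : W // y ≠ v})} (hS : #S ≤ 2)
    {a : {x : V // x ≠ u}} {b : {y : W // y ≠ v}}
    (hab : (splice G H u v π).Adj (.inl a) (.inr b)) (ha : .inl a ∉ S) (hb : .inr b ∉ S)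
    {x : {x : V // x ≠ u}} (hx : .inl x ∉ S) :
    ((splice G H u v π).induce (↑S)ᶜ).Reachable ⟨.inl x, hx⟩ ⟨.inl a, ha⟩ := by
  have hcard := S.card_toLeft_add_card_toRight
  by_cases hl : #S.toLeft ≤ 1
  · exact splice_induce_reachable_inl_inl hG hl hx ha
  obtain ⟨y, hy, hxy⟩ :=
    splice_induce_exists_reachable_inl_inr (π := π) hG (by omega) (card_eq_zero.1 (by omega)) hx
  have hyb : ((splice G H u v π).induce (↑S)ᶜ).Reachable ⟨.inr y, hy⟩ ⟨.inr b, hb⟩ :=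
    splice_induce_reachable_of_swap <|
      splice_induce_reachable_inl_inl hH (by rw [toLeft_map_sumComm]; omega) _ _
  exact hxy.trans (hyb.trans (induce_adj.2 hab.symm).reachable)

theorem splice_induce_connected_of_adj (hG : KConnected 3 G) (hH : KConnected 3 H)
    {S : Finset ({x : V // x ≠ u} ⊕ {y : W // y ≠ v})} (hS : #S ≤ 2)
    {a : {x : V // x ≠ u}} {b : {y : W // y ≠ v}}
    (hab : (splice G H u v π).Adj (.inl a) (.inr b)) (ha : .inl a ∉ S) (hb : .inr b ∉ S) :
    ((splice G H u v π).induce (↑S)ᶜ).Connected := by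
  refine (connected_iff_exists_forall_reachable _).2 ⟨⟨.inl a, ha⟩, ?_⟩
  rintro ⟨x | y, hp⟩
  · exact (splice_induce_reachable_inl_of_adj hG hH hS hab ha hb hp).symm
  · have hba : (splice H G v u π.symm).Adj (.inl b) (.inr a) :=
      (spliceComm.map_adj_iff.2 hab : (splice H G v u π.symm).Adj (.inr a) (.inl b)).symm
    have hyb : ((splice G H u v π).induce (↑S)ᶜ).Reachable ⟨.inr y, hp⟩ ⟨.inr b, hb⟩ :=
      splice_induce_reachable_of_swap <|
        splice_induce_reachable_inl_of_adj hH hG (by rwa [card_map]) hba _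
          (Finset.swap_mem_compl_map_sumComm_iff (p := .inl a) |>.2 ha) _
    exact (hyb.trans (induce_adj.2 hab.symm).reachable).symm

theorem KConnected.splice (hG : KConnected 3 G) (hH : KConnected 3 H)
    (hu : 2 < (G.neighborSet u).ncard) : KConnected 3 (splice G H u v π) := by
  have hV := hG.1
  have hW := hH.1
  have : Finite V := Nat.finite_of_card_ne_zero (by omega)
  have : Finite W := Nat.finite_of_card_ne_zero (by omega)
  refine ⟨?_, fun S hS => ?_⟩
  · have := Nat.card_subtype_ne_add_one u
    have := Nat.card_subtype_ne_add_one v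
    rw [Nat.card_sum]
    omega
  obtain ⟨a, ha, hb⟩ := exists_notMem_and_notMem_of_injective
    (f := fun a : G.neighborSet u => (⟨a, a.2.ne'⟩ : {x // x ≠ u}))
    (g := fun a => (⟨π a, (π a).2.ne'⟩ : {y // y ≠ v}))
    (fun a b h => Subtype.ext (Subtype.mk.inj h))
    (fun a b h => π.injective (Subtype.ext (Subtype.mk.inj h))) S.toLeft S.toRight
    (by rw [card_toLeft_add_card_toRight, Nat.card_coe_set_eq]; omega)
  exact splice_induce_connected_of_adj hG hH (by omega)
    (splice_adj_inl_inr (a := ⟨a.1, a.2.ne'⟩).2 ⟨a.2, _, rfl⟩)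
    (mem_toLeft.not.1 ha) (mem_toRight.not.1 hb)

end Splice

theorem splice_cubic_threeConnected_general {V W : Type*}
    (G : SimpleGraph V) (H : SimpleGraph W) (u : V) (v : W)
    (π : ↥(G.neighborSet u) ≃ ↥(H.neighborSet v))
    (hGcub : IsCubic G) (hHcub : IsCubic H)
    (hG3 : KConnected 3 G) (hH3 : KConnected 3 H) :
    IsCubic (splice G H u v π) ∧ KConnected 3 (splice G H u v π) :=
  ⟨hGcub.splice hHcub, hG3.splice hH3 (by rw [hGcub u]; norm_num)⟩

/-- any splicing of two 3-connected cubic graphs is cubic and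
3-connected. -/
theorem splice_cubic_threeConnected {V W : Type*} [Fintype V] [Fintype W]
    [DecidableEq V] [DecidableEq W]
    (G : SimpleGraph V) (H : SimpleGraph W) (u : V) (v : W)
    (π : ↥(G.neighborSet u) ≃ ↥(H.neighborSet v))
    (hGcub : IsCubic G) (hHcub : IsCubic H)
    (hG3 : KConnected 3 G) (hH3 : KConnected 3 H) :
    IsCubic (splice G H u v π) ∧ KConnected 3 (splice G H u v π) :=
  splice_cubic_threeConnected_general G H u v π hGcub hHcub hG3 hH3
end

section
/- Let ∂(X) be a separating cut of a 2-connected cubic graph G. Then every λ-matchable vertex of the contraction G/X̄ (other than the contraction vertex) is also λ-matchable in G. -/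
open SimpleGraph Set

/-- `∂(X)` is a separating cut of the matching covered graph `G`: both
cut-contractions `G/X̄` (= `contractOut G X`) and `G/X` (= `contractOut G Xᶜ`)
are matching covered. -/
def IsSeparatingCut {V : Type*} (G : SimpleGraph V) (X : Set V) : Prop :=
  MatchingCovered G ∧ MatchingCovered (contractOut G X) ∧ MatchingCovered (contractOut G Xᶜ)

/-! A λ-matching of `G/X̄` at `a` matches the contraction vertex along a single cut edge `bw`.
Since `G/X` is matching covered, that same cut edge lies in a perfect matching of `G/X`.
Both cut-contractions read the cut edge as `bw`, so the two pieces splice into a λ-matching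
of `G` at `a`: degrees on the shore `X` come from the first piece, degrees on `X̄` from the
second. -/

open Function

namespace SimpleGraph

variable {V : Type*} {G : SimpleGraph V}

lemma isLambdaMatchable_iff_exists_le {v : V} :
    IsLambdaMatchable G v ↔
      ∃ H ≤ G, (H.neighborSet v).ncard = 3 ∧ ∀ u, u ≠ v → (H.neighborSet u).ncard = 1 :=
  ⟨fun ⟨M, _, h3, h1⟩ => ⟨M.spanningCoe, M.spanningCoe_le, h3, h1⟩,
    fun ⟨H, hH, h3, h1⟩ => ⟨G.toSubgraph H hH, toSubgraph.isSpanning H hH, h3, h1⟩⟩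

lemma Subgraph.IsPerfectMatching.neighborSet_eq_singleton {M : G.Subgraph}
    (hM : M.IsPerfectMatching) {v w : V} (h : M.Adj v w) : M.neighborSet v = {w} :=
  eq_singleton_iff_unique_mem.2 ⟨h, fun _ hu => (Subgraph.isPerfectMatching_iff.1 hM v).unique hu h⟩

lemma Subgraph.IsPerfectMatching.ncard_neighborSet {M : G.Subgraph}
    (hM : M.IsPerfectMatching) (v : V) : (M.neighborSet v).ncard = 1 := by
  obtain ⟨w, hw, -⟩ := Subgraph.isPerfectMatching_iff.1 hM v
  rw [hM.neighborSet_eq_singleton hw, ncard_singleton]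

section Contraction

variable {X : Set V}

@[simp]
lemma contractOut_adj_some_some {a b : X} :
    (contractOut G X).Adj (some a) (some b) ↔ G.Adj a b := by
  simp only [contractOut, fromRel_adj, ne_eq, Option.some.injEq]
  exact ⟨fun h => h.2.elim id fun h => h.symm, fun h => ⟨fun hab => h.ne (congrArg _ hab), .inl h⟩⟩

@[simp]
lemma contractOut_adj_some_none {a : X} :
    (contractOut G X).Adj (some a) none ↔ ∃ w ∉ X, G.Adj a w := by
  simp [contractOut]

/-- The vertices of `G/X̄` as vertices of `G`, the contraction vertex read as `w`. -/
def uncontract (X : Set V) {w : V} (hw : w ∉ X) : Option X ↪ V :=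
  (Embedding.subtype (· ∈ X)).optionElim w (by simpa using hw)

variable {H : SimpleGraph (Option X)} {b : X} {w : V} (hw : w ∉ X)

lemma map_uncontract_le (hH : H ≤ contractOut G X) (hb : H.neighborSet none = {some b})
    (hbw : G.Adj b w) : H.map (uncontract X hw) ≤ G := by
  have hnone {q} (h : H.Adj none q) : q = some b := hb.subset h
  rintro _ _ ⟨-, (_ | p), (_ | q), hpq, rfl, rfl⟩
  · exact (hpq.ne rfl).elim
  · cases hnone hpq
    exact hbw.symm
  · cases hnone hpq.symm
    exact hbw
  · exact contractOut_adj_some_some.1 (hH hpq)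

lemma map_uncontract_adj_of_notMem (hb : H.neighborSet none = {some b}) {x y : V} (hx : x ∉ X)
    (h : (H.map (uncontract X hw)).Adj x y) : x = w ∧ y = b := by
  obtain ⟨-, (_ | p), q, hpq, rfl, rfl⟩ := h
  · cases hb.subset hpq
    exact ⟨rfl, rfl⟩
  · exact (hx p.2).elim

lemma neighborSet_map_uncontract_sup (hb : H.neighborSet none = {some b}) {H' : SimpleGraph V}
    (hH' : ∀ x y, x ∈ X → H'.Adj x y → x = b ∧ y = w) (v : X) :
    (H.map (uncontract X hw) ⊔ H').neighborSet v = uncontract X hw '' H.neighborSet (some v) := by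
  have hbw : (H.map (uncontract X hw)).Adj b w :=
    (map_adj_apply (a := some b) (b := none)).2 (hb.symm.subset rfl).symm
  rw [neighborSet_sup, union_eq_left.2, ← neighborSet_map]
  · rfl
  intro y hy
  obtain ⟨hvb, rfl⟩ := hH' v y v.2 hy
  exact hvb ▸ hbw

theorem exists_le_splice {H₁ : SimpleGraph (Option X)} {H₂ : SimpleGraph (Option ↥Xᶜ)}
    (h₁ : H₁ ≤ contractOut G X) (h₂ : H₂ ≤ contractOut G Xᶜ) {b : X} {w : ↥Xᶜ}
    (hbw : G.Adj b w) (hb : H₁.neighborSet none = {some b}) (hw : H₂.neighborSet none = {some w}) :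
    ∃ H ≤ G, (∀ v : X, (H.neighborSet v).ncard = (H₁.neighborSet (some v)).ncard) ∧
      ∀ v : ↥Xᶜ, (H.neighborSet v).ncard = (H₂.neighborSet (some v)).ncard := by
  have hb' : b.1 ∉ Xᶜ := not_not.2 b.2
  refine ⟨H₁.map (uncontract X w.2) ⊔ H₂.map (uncontract Xᶜ hb'),
    sup_le (map_uncontract_le _ h₁ hb hbw) (map_uncontract_le _ h₂ hw hbw.symm), fun v => ?_,
    fun v => ?_⟩
  · rw [neighborSet_map_uncontract_sup _ hb
      (fun x y hx => map_uncontract_adj_of_notMem hb' hw (not_not.2 hx)) v,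
      ncard_image_of_injective _ (uncontract X w.2).injective]
  · rw [sup_comm, neighborSet_map_uncontract_sup _ hw
      (fun x y hx => map_uncontract_adj_of_notMem w.2 hb hx) v,
      ncard_image_of_injective _ (uncontract Xᶜ hb').injective]

end Contraction

end SimpleGraph

theorem lambdaMatchable_of_contraction_general {V : Type*} (G : SimpleGraph V) (X : Set V) (hsep : IsSeparatingCut G X) :
    ∀ a : ↥X, IsLambdaMatchable (contractOut G X) (some a) → IsLambdaMatchable G a.1 := by
  intro a ha
  obtain ⟨H₁, h₁, h₁a, h₁deg⟩ := isLambdaMatchable_iff_exists_le.1 ha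
  obtain ⟨p, hp⟩ := ncard_eq_one.1 (h₁deg none (Option.some_ne_none a).symm)
  have hnp : H₁.Adj none p := hp.symm.subset rfl
  obtain ⟨b, rfl⟩ : ∃ b, p = some b := by
    rcases p with _ | b
    · exact (hnp.ne rfl).elim
    · exact ⟨b, rfl⟩
  obtain ⟨w, hwX, hbw⟩ := contractOut_adj_some_none.1 (h₁ hnp).symm
  have hcut : s(some ⟨w, hwX⟩, none) ∈ (contractOut G Xᶜ).edgeSet :=
    contractOut_adj_some_none.2 ⟨b, not_not.2 b.2, hbw.symm⟩
  obtain ⟨M, hM, hMw⟩ := hsep.2.2.2.2 _ hcut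
  obtain ⟨H, hH, hX, hXc⟩ := exists_le_splice h₁ M.spanningCoe_le (w := ⟨w, hwX⟩) hbw hp
    (hM.neighborSet_eq_singleton (M.mem_edgeSet.1 hMw).symm)
  refine isLambdaMatchable_iff_exists_le.2 ⟨H, hH, (hX a).trans h₁a, fun u hu => ?_⟩
  by_cases huX : u ∈ X
  · exact (hX ⟨u, huX⟩).trans (h₁deg _ fun h => hu (congrArg Subtype.val (Option.some.inj h)))
  · exact (hXc ⟨u, huX⟩).trans (hM.ncard_neighborSet _)

/-- if `∂(X)` is a separating cut of a 2-connected cubic graph,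
then every λ-matchable vertex of `G/X̄` other than the contraction vertex is
λ-matchable in `G`. -/
theorem lambdaMatchable_of_contraction {V : Type*} [Fintype V]
    (G : SimpleGraph V) (hconn : KConnected 2 G) (hcub : IsCubic G)
    (X : Set V) (hsep : IsSeparatingCut G X) :
    ∀ a : ↥X, IsLambdaMatchable (contractOut G X) (some a) → IsLambdaMatchable G a.1 :=
  lambdaMatchable_of_contraction_general G X hsep
end

section
/- Every vertex of a cubic brick G is λ-matchable; that is, for each vertex v of G there is a spanning subgraph in which v has degree 3 and every other vertex has degree 1. -/
/-!
Let `x`, `y` be two distinct neighbours of `v`. Bicriticality gives a perfect matching of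
`G - x - y`; adding the edges `vx` and `vy` to it covers `x` and `y` once each and raises the
degree of `v` to three.
-/

open SimpleGraph Set

/-- `G` is bicritical: order at least four and `G − u − v` is matchable for all
distinct `u`, `v`. -/
def Bicritical {V : Type*} (G : SimpleGraph V) : Prop :=
  4 ≤ Nat.card V ∧ ∀ u v : V, u ≠ v → Matchable (G.induce ({u, v} : Set V)ᶜ)

/-- `G` is a brick: 3-connected and bicritical. -/
def IsBrick {V : Type*} (G : SimpleGraph V) : Prop :=
  KConnected 3 G ∧ Bicritical G

namespace SimpleGraph.Subgraph

variable {V : Type*} {G : SimpleGraph V} {M : G.Subgraph} {u w : V}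

lemma neighborSet_eq_empty_of_notMem_verts (hu : u ∉ M.verts) : M.neighborSet u = ∅ :=
  Set.eq_empty_of_forall_notMem fun _ h ↦ hu h.fst_mem

lemma IsMatching.neighborSet_eq (hM : M.IsMatching) (h : M.Adj u w) : M.neighborSet u = {w} :=
  Set.eq_singleton_iff_unique_mem.mpr ⟨h, fun _ h' ↦ hM.eq_of_adj_left h' h⟩

end SimpleGraph.Subgraph

open SimpleGraph.Subgraph

section

variable {V : Type*} {G : SimpleGraph V}

lemma Matchable.exists_isMatching_verts_eq {S : Set V} (h : Matchable (G.induce S)) :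
    ∃ M : G.Subgraph, M.IsMatching ∧ M.verts = S := by
  obtain ⟨M, hM⟩ := h
  refine ⟨M.map (Embedding.induce S).toHom, hM.1.map _ Subtype.val_injective, ?_⟩
  simp only [map_verts, hM.2.verts_eq_univ, Set.image_univ]
  exact Subtype.range_coe

lemma isLambdaMatchable_of_isMatching_verts_eq_compl_pair {M : G.Subgraph} {v x y : V}
    (hM : M.IsMatching) (hverts : M.verts = {x, y}ᶜ) (hxy : x ≠ y)
    (hvx : G.Adj v x) (hvy : G.Adj v y) : IsLambdaMatchable G v := by
  have mem_verts {u} (hux : u ≠ x) (huy : u ≠ y) : u ∈ M.verts := by simp [hverts, hux, huy]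
  have ne_of_mem_verts {u} (hu : u ∈ M.verts) : u ≠ x ∧ u ≠ y := by simpa [hverts] using hu
  refine ⟨M ⊔ G.subgraphOfAdj hvx ⊔ G.subgraphOfAdj hvy, ?_, ?_, ?_⟩
  · intro u
    by_cases hux : u = x
    · simp [hux]
    by_cases huy : u = y
    · simp [huy]
    simp [mem_verts hux huy]
  · obtain ⟨a, ha, -⟩ := hM (mem_verts hvx.ne hvy.ne)
    obtain ⟨hax, hay⟩ := ne_of_mem_verts ha.snd_mem
    rw [Subgraph.neighborSet_sup, Subgraph.neighborSet_sup, hM.neighborSet_eq ha,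
      neighborSet_fst_subgraphOfAdj, neighborSet_fst_subgraphOfAdj, Set.union_singleton,
      Set.union_singleton, Set.ncard_eq_three]
    exact ⟨y, x, a, hxy.symm, hay.symm, hax.symm, rfl⟩
  · intro u huv
    rw [Subgraph.neighborSet_sup, Subgraph.neighborSet_sup]
    by_cases hux : u = x
    · subst hux
      rw [neighborSet_eq_empty_of_notMem_verts (by simp [hverts]),
        neighborSet_snd_subgraphOfAdj, neighborSet_subgraphOfAdj_of_ne_of_ne _ huv hxy]
      simp
    by_cases huy : u = y
    · subst huy
      rw [neighborSet_eq_empty_of_notMem_verts (by simp [hverts]),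
        neighborSet_subgraphOfAdj_of_ne_of_ne _ huv hux, neighborSet_snd_subgraphOfAdj]
      simp
    obtain ⟨b, hb, -⟩ := hM (mem_verts hux huy)
    rw [hM.neighborSet_eq hb, neighborSet_subgraphOfAdj_of_ne_of_ne _ huv hux,
      neighborSet_subgraphOfAdj_of_ne_of_ne _ huv huy]
    simp

lemma Bicritical.isLambdaMatchable (hG : Bicritical G) {v x y : V} (hxy : x ≠ y)
    (hvx : G.Adj v x) (hvy : G.Adj v y) : IsLambdaMatchable G v := by
  obtain ⟨M, hM, hverts⟩ := (hG.2 x y hxy).exists_isMatching_verts_eq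
  exact isLambdaMatchable_of_isMatching_verts_eq_compl_pair hM hverts hxy hvx hvy

end

theorem cubic_brick_every_vertex_lambdaMatchable_general {V : Type*}
    (G : SimpleGraph V) (hcub : IsCubic G) (hbrick : IsBrick G) :
    ∀ v : V, IsLambdaMatchable G v := by
  intro v
  obtain ⟨x, y, _, hxy, -, -, hN⟩ := Set.ncard_eq_three.mp (hcub v)
  have hvx : x ∈ G.neighborSet v := by simp [hN]
  have hvy : y ∈ G.neighborSet v := by simp [hN]
  exact hbrick.2.isLambdaMatchable hxy hvx hvy

/-- every vertex of a cubic brick is λ-matchable. -/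
theorem cubic_brick_every_vertex_lambdaMatchable {V : Type*} [Fintype V]
    (G : SimpleGraph V) (hcub : IsCubic G) (hbrick : IsBrick G) :
    ∀ v : V, IsLambdaMatchable G v :=
  cubic_brick_every_vertex_lambdaMatchable_general G hcub hbrick
end

section
/- Let H be a bipartite matching covered graph with color classes A and B, and suppose H − a₁ − a₂ − b₁ − b₂ has a perfect matching for all distinct a₁, a₂ ∈ A and distinct b₁, b₂ ∈ B (with |A| ≥ 3). Then for every nonempty subset A' of A with |A'| ≤ |A| − 2, we have |N_H(A')| ≥ |A'| + 2. -/
/-!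
Delete two vertices of `A \ A'` (possible as `|A'| ≤ |A| - 2`) and two vertices `b₁ ≠ b₂`
of `B`. A perfect matching of the rest matches `A'` injectively into `N(A') \ {b₁, b₂}`, so
`|A'| ≤ |N(A') \ {b₁, b₂}|`, and taking `b₁, b₂ ∈ N(A')` gives the bound. The same inequality
forces `|N(A')| ≥ 2` as soon as `|B| ≥ 2`, and a perfect matching of `H` gives `|B| ≥ |A| ≥ 3`.
-/

open SimpleGraph Set

theorem Set.add_two_le_ncard_of_forall_ncard_diff_pair {α : Type*} {N B : Set α} {k : ℕ}
    (hN : N.Finite) (hNB : N ⊆ B) (hB : 1 < B.ncard) (hk : 0 < k)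
    (h : ∀ b₁ ∈ B, ∀ b₂ ∈ B, b₁ ≠ b₂ → k ≤ (N \ {b₁, b₂}).ncard) : k + 2 ≤ N.ncard := by
  by_cases hN_card : 1 < N.ncard
  · obtain ⟨c₁, hc₁, c₂, hc₂, hc⟩ := (one_lt_ncard hN).1 hN_card
    have := h c₁ (hNB hc₁) c₂ (hNB hc₂) hc
    rw [ncard_sdiff (pair_subset hc₁ hc₂), ncard_pair hc] at this
    omega
  · exfalso
    obtain ⟨b₁, hb₁, b₂, hb₂, hb⟩ := (one_lt_ncard (finite_of_ncard_pos (by omega))).1 hB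
    rcases (ncard_le_one_iff_eq hN).1 (by omega) with rfl | ⟨c, rfl⟩
    · have := h b₁ hb₁ b₂ hb₂ hb
      rw [empty_sdiff, ncard_empty] at this
      omega
    · obtain ⟨b, hb, hbc⟩ := exists_ne_of_one_lt_ncard hB c
      have := h c (hNB rfl) b hb hbc.symm
      rw [sdiff_eq_empty.2 (singleton_subset_iff.2 (mem_insert c _)), ncard_empty] at this
      omega

section

variable {V : Type*}

theorem SimpleGraph.Subgraph.IsMatching.ncard_le_ncard {G : SimpleGraph V} {M : G.Subgraph}
    (hM : M.IsMatching) {S T : Set V} (hT : T.Finite) (hS : S ⊆ M.verts)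
    (hST : ∀ v ∈ S, ∀ w, M.Adj v w → w ∈ T) : S.ncard ≤ T.ncard := by
  obtain rfl | ⟨v₀, -⟩ := S.eq_empty_or_nonempty
  · simp
  have : Nonempty V := ⟨v₀⟩
  have hpartner : ∀ v ∈ S, M.Adj v (Classical.epsilon (M.Adj v)) := fun v hv =>
    Classical.epsilon_spec (hM (hS hv)).exists
  refine Set.ncard_le_ncard_of_injOn _ (fun v hv => hST v hv _ (hpartner v hv)) ?_ hT
  intro v hv v' hv' h
  exact hM.eq_of_adj_right (hpartner v hv) (by simpa only [h] using hpartner v' hv')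

theorem ncard_le_ncard_setNbhd_diff_of_matchable [Finite V] {H : SimpleGraph V} {S A' : Set V}
    (hS : Matchable (H.induce Sᶜ)) (hA' : Disjoint A' S) :
    A'.ncard ≤ (setNbhd H A' \ S).ncard := by
  obtain ⟨M, hM⟩ := hS
  let e : H.induce Sᶜ ↪g H := Embedding.induce Sᶜ
  refine (hM.1.map e.toHom e.injective).ncard_le_ncard (Set.toFinite _)
    (fun a ha => ⟨⟨a, hA'.notMem_of_mem_left ha⟩, hM.2 _, rfl⟩) ?_
  rintro a ha _ ⟨x, y, hxy, rfl, rfl⟩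
  exact ⟨⟨x, ha, M.adj_sub hxy⟩, y.2⟩

theorem IsBipartitionOf.mem_right_of_adj {H : SimpleGraph V} {A B : Set V}
    (hbip : IsBipartitionOf H A B) {a v : V} (ha : a ∈ A) (hav : H.Adj a v) : v ∈ B :=
  ((hbip.2.2 a v hav).resolve_right fun h => hbip.2.1.notMem_of_mem_left ha h.1).2

theorem IsBipartitionOf.setNbhd_subset {H : SimpleGraph V} {A B A' : Set V}
    (hbip : IsBipartitionOf H A B) (hA' : A' ⊆ A) : setNbhd H A' ⊆ B := by
  rintro v ⟨a, ha, hav⟩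
  exact hbip.mem_right_of_adj (hA' ha) hav

theorem MatchingCovered.matchable {G : SimpleGraph V} (hG : MatchingCovered G) : Matchable G := by
  have : Finite V := Nat.finite_of_card_ne_zero (by linarith [hG.2.1])
  have : Nontrivial V := Finite.one_lt_card_iff_nontrivial.1 hG.2.1
  obtain ⟨v⟩ := (inferInstance : Nonempty V)
  obtain ⟨w, hvw⟩ := hG.1.preconnected.exists_adj_of_nontrivial v
  obtain ⟨M, hM, -⟩ := hG.2.2 s(v, w) hvw
  exact ⟨M, hM⟩

theorem IsBipartitionOf.ncard_le_ncard_of_matchable [Finite V] {H : SimpleGraph V} {A B : Set V}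
    (hbip : IsBipartitionOf H A B) (hH : Matchable H) : A.ncard ≤ B.ncard := by
  obtain ⟨M, hM⟩ := hH
  refine hM.1.ncard_le_ncard (toFinite _) (fun a _ => hM.2 a) fun a ha w hw => ?_
  exact hbip.mem_right_of_adj ha (M.adj_sub hw)

end

theorem brace_neighborhood_bound_general {V : Type*} [Fintype V]
    (H : SimpleGraph V) (A B : Set V) (hbip : IsBipartitionOf H A B)
    (hmc : MatchingCovered H)
    (hquad : ∀ a₁ ∈ A, ∀ a₂ ∈ A, ∀ b₁ ∈ B, ∀ b₂ ∈ B, a₁ ≠ a₂ → b₁ ≠ b₂ →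
      Matchable (H.induce ({a₁, a₂, b₁, b₂} : Set V)ᶜ)) :
    ∀ A' : Set V, A' ⊆ A → A'.Nonempty → A'.ncard ≤ A.ncard - 2 →
      A'.ncard + 2 ≤ (setNbhd H A').ncard := by
  intro A' hA'A hA'ne hA'le
  have hA'pos : 0 < A'.ncard := (ncard_pos (toFinite _)).2 hA'ne
  obtain ⟨a₁, ha₁, a₂, ha₂, ha⟩ := (one_lt_ncard (toFinite _)).1
    (show 1 < (A \ A').ncard by rw [ncard_sdiff' hA'A (toFinite _)]; omega)
  have hB : 1 < B.ncard := by
    have := hbip.ncard_le_ncard_of_matchable hmc.matchable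
    omega
  refine add_two_le_ncard_of_forall_ncard_diff_pair (toFinite _) (hbip.setNbhd_subset hA'A) hB
    hA'pos fun b₁ hb₁ b₂ hb₂ hb => ?_
  have hbA' : ∀ b ∈ B, b ∉ A' := fun b hb h => hbip.2.1.notMem_of_mem_left (hA'A h) hb
  calc A'.ncard ≤ (setNbhd H A' \ {a₁, a₂, b₁, b₂}).ncard := by
        refine ncard_le_ncard_setNbhd_diff_of_matchable
          (hquad a₁ ha₁.1 a₂ ha₂.1 b₁ hb₁ b₂ hb₂ ha hb) ?_
        simp only [disjoint_insert_right, disjoint_singleton_right]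
        exact ⟨ha₁.2, ha₂.2, hbA' b₁ hb₁, hbA' b₂ hb₂⟩
    _ ≤ (setNbhd H A' \ {b₁, b₂}).ncard :=
        ncard_le_ncard
          (sdiff_subset_sdiff_right ((subset_insert _ _).trans (subset_insert _ _))) (toFinite _)

/-- if `H[A,B]` is bipartite matching covered with `|A| ≥ 3` and
`H − a₁ − a₂ − b₁ − b₂` is matchable for all distinct `a₁, a₂ ∈ A` and distinct
`b₁, b₂ ∈ B`, then `|N(A')| ≥ |A'| + 2` for every nonempty `A' ⊆ A` with
`|A'| ≤ |A| − 2`. -/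
theorem brace_neighborhood_bound {V : Type*} [Fintype V]
    (H : SimpleGraph V) (A B : Set V) (hbip : IsBipartitionOf H A B)
    (hmc : MatchingCovered H) (hA : 3 ≤ A.ncard)
    (hquad : ∀ a₁ ∈ A, ∀ a₂ ∈ A, ∀ b₁ ∈ B, ∀ b₂ ∈ B, a₁ ≠ a₂ → b₁ ≠ b₂ →
      Matchable (H.induce ({a₁, a₂, b₁, b₂} : Set V)ᶜ)) :
    ∀ A' : Set V, A' ⊆ A → A'.Nonempty → A'.ncard ≤ A.ncard - 2 →
      A'.ncard + 2 ≤ (setNbhd H A').ncard :=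
  brace_neighborhood_bound_general H A B hbip hmc hquad
end

section
/- Let H be a cubic brace distinct from the 4-cycle with double edges (𝔸C₄), with color classes A and B. Then for every a ∈ A and b ∈ B, the pair (a,b) is λ-matchable: H has a spanning subgraph in which a and b both have degree 3 and every other vertex has degree 1. -/
open SimpleGraph Set

/-!
Since `a` and `b` have degree three, a λ-matching of `(a, b)` consists of all edges at `a` and `b`
together with a perfect matching of `H − N[a] − N[b]`; the neighbourhoods of `a` and `b` lie in
different colour classes, so every other vertex is then covered exactly once. That perfect matching
comes from Hall's theorem. Deleting two vertices of each colour class leaves `H` matchable, which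
forces `|N(S)| ≥ |S| + 2` whenever `S ⊆ A` and `|S| ≤ |A| - 2`. For `S ⊆ A` avoiding `N[b]`,
applying this to `S ∪ {a}` yields `|N(S) \ N(a)| ≥ |S| + 3 - 3`, which is Hall's condition in
`H − N[a] − N[b]`; the same holds on the side of `B` by symmetry.
-/

section

variable {V : Type*} {G : SimpleGraph V} {A B S T Y : Set V} {a b : V}

def MatchableAfterDeletingPairs (G : SimpleGraph V) (A B : Set V) : Prop :=
  ∀ a₁ ∈ A, ∀ a₂ ∈ A, ∀ b₁ ∈ B, ∀ b₂ ∈ B, a₁ ≠ a₂ → b₁ ≠ b₂ →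
    Matchable (G.induce ({a₁, a₂, b₁, b₂} : Set V)ᶜ)

namespace SimpleGraph

def closedNeighborSet (G : SimpleGraph V) (v : V) : Set V := insert v (G.neighborSet v)

def lambdaSubgraph (G : SimpleGraph V) (a b : V) (P : G.Subgraph) : G.Subgraph where
  verts := univ
  Adj u v := G.Adj u v ∧ (u = a ∨ v = a ∨ u = b ∨ v = b ∨ P.Adj u v)
  adj_sub h := h.1
  edge_vert _ := mem_univ _
  symm := ⟨fun _ _ h => ⟨h.1.symm, by have := @P.adj_symm; tauto⟩⟩

variable {P : G.Subgraph} {u : V}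

theorem lambdaSubgraph_neighborSet_left :
    (G.lambdaSubgraph a b P).neighborSet a = G.neighborSet a := by
  ext v
  simp [lambdaSubgraph]

theorem lambdaSubgraph_neighborSet_right :
    (G.lambdaSubgraph a b P).neighborSet b = G.neighborSet b := by
  ext v
  simp [lambdaSubgraph]

theorem lambdaSubgraph_neighborSet_of_ne (hua : u ≠ a) (hub : u ≠ b) :
    (G.lambdaSubgraph a b P).neighborSet u = (G.neighborSet u ∩ {a, b}) ∪ P.neighborSet u := by
  ext v
  simp only [Subgraph.mem_neighborSet, lambdaSubgraph, mem_union, mem_inter_iff, mem_neighborSet,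
    mem_insert_iff, mem_singleton_iff, hua, hub, false_or]
  have := @P.adj_sub u v
  tauto

theorem neighborSet_inter_pair_eq_singleton (ha : G.Adj a u) (hb : ¬ G.Adj b u) :
    G.neighborSet u ∩ {a, b} = {a} := by
  ext v
  simp only [mem_inter_iff, mem_neighborSet, mem_insert_iff, mem_singleton_iff]
  constructor
  · rintro ⟨huv, rfl | rfl⟩
    exacts [rfl, absurd huv.symm hb]
  · rintro rfl
    exact ⟨ha.symm, Or.inl rfl⟩

end SimpleGraph

theorem IsBipartitionOf.isBipartiteWith (h : IsBipartitionOf G A B) : G.IsBipartiteWith A B :=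
  ⟨h.2.1, fun u v huv => h.2.2 u v huv⟩

theorem MatchableAfterDeletingPairs.symm (h : MatchableAfterDeletingPairs G A B) :
    MatchableAfterDeletingPairs G B A := by
  intro b₁ hb₁ b₂ hb₂ a₁ ha₁ a₂ ha₂ hb ha
  have hswap : ({b₁, b₂, a₁, a₂} : Set V) = {a₁, a₂, b₁, b₂} := by
    ext; simp only [mem_insert_iff, mem_singleton_iff]; tauto
  rw [hswap]
  exact h a₁ ha₁ a₂ ha₂ b₁ hb₁ b₂ hb₂ ha hb

theorem setNbhd_mono (h : S ⊆ T) : setNbhd G S ⊆ setNbhd G T :=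
  fun _ ⟨s, hs, hadj⟩ => ⟨s, h hs, hadj⟩

theorem setNbhd_insert : setNbhd G (insert a S) = G.neighborSet a ∪ setNbhd G S := by
  ext v; simp [setNbhd]

theorem setNbhd_subset_of_isBipartiteWith (hG : G.IsBipartiteWith A B) (hS : S ⊆ A) :
    setNbhd G S ⊆ B :=
  fun _ ⟨_, hs, hadj⟩ => hG.mem_of_mem_adj (hS hs) hadj

theorem Matchable.exists_isMatching_verts_eq_s13 (h : Matchable (G.induce Y)) :
    ∃ P : G.Subgraph, P.IsMatching ∧ P.verts = Y := by
  obtain ⟨M, hM⟩ := h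
  refine ⟨M.map (Embedding.induce Y).toHom,
    hM.1.map _ (Embedding.induce (G := G) Y).injective, ?_⟩
  rw [Subgraph.map_verts, hM.2.verts_eq_univ, image_univ]
  exact Subtype.range_coe

theorem ncard_le_ncard_setNbhd_inter_verts [Finite V] {P : G.Subgraph} (hP : P.IsMatching)
    (hS : S ⊆ P.verts) : S.ncard ≤ (setNbhd G S ∩ P.verts).ncard := by
  classical
  let partner : V → V := fun v => if hv : v ∈ P.verts then (hP hv).exists.choose else v
  have hpartner : ∀ v ∈ P.verts, P.Adj v (partner v) := fun v hv => by
    simpa only [partner, dif_pos hv] using (hP hv).exists.choose_spec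
  refine ncard_le_ncard_of_injOn partner (fun s hs => ?_) fun s hs t ht hst => ?_
  · exact ⟨⟨s, hs, P.adj_sub (hpartner s (hS hs))⟩, P.edge_vert (hpartner s (hS hs)).symm⟩
  · exact hP.eq_of_adj_right (hpartner s (hS hs)) (hst ▸ hpartner t (hS ht))

theorem ncard_add_two_le_ncard_setNbhd [Finite V] (hG : G.IsBipartiteWith A B)
    (hbr : MatchableAfterDeletingPairs G A B) (hSA : S ⊆ A) (hS : S.ncard + 2 ≤ A.ncard)
    (hN : 2 ≤ (setNbhd G S).ncard) : S.ncard + 2 ≤ (setNbhd G S).ncard := by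
  by_contra! hlt
  obtain ⟨b₁, hb₁, b₂, hb₂, hb⟩ := (one_lt_ncard).1 (by omega : 1 < (setNbhd G S).ncard)
  have hAS : 1 < (A \ S).ncard := by rw [ncard_sdiff hSA]; omega
  obtain ⟨a₁, ha₁, a₂, ha₂, ha⟩ := (one_lt_ncard).1 hAS
  have hNB := setNbhd_subset_of_isBipartiteWith hG hSA
  obtain ⟨P, hP, hPverts⟩ :=
    (hbr a₁ ha₁.1 a₂ ha₂.1 b₁ (hNB hb₁) b₂ (hNB hb₂) ha hb).exists_isMatching_verts_eq_s13
  have hSP : S ⊆ P.verts := by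
    intro s hs
    have hsB : s ∉ B := hG.disjoint.notMem_of_mem_left (hSA hs)
    rw [hPverts]
    simp only [mem_compl_iff, mem_insert_iff, mem_singleton_iff, not_or]
    exact ⟨fun h => ha₁.2 (h ▸ hs), fun h => ha₂.2 (h ▸ hs),
      fun h => hsB (h ▸ hNB hb₁), fun h => hsB (h ▸ hNB hb₂)⟩
  have hmatch := ncard_le_ncard_setNbhd_inter_verts hP hSP
  have hsub : setNbhd G S ∩ P.verts ⊆ setNbhd G S \ {b₁, b₂} := by
    rw [hPverts]
    intro v ⟨hv, hvZ⟩
    exact ⟨hv, fun h => hvZ (by simp only [mem_insert_iff, mem_singleton_iff] at h ⊢; tauto)⟩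
  have hpair : (setNbhd G S \ {b₁, b₂}).ncard = (setNbhd G S).ncard - 2 := by
    rw [ncard_sdiff (pair_subset hb₁ hb₂), ncard_pair hb]
  have := ncard_le_ncard hsub
  omega

theorem ncard_le_ncard_setNbhd_inter_compl_closedNeighborSet [Finite V]
    (hG : G.IsBipartiteWith A B) (hbr : MatchableAfterDeletingPairs G A B) (hcub : IsCubic G)
    (ha : a ∈ A) (hb : b ∈ B) (hS : S ⊆ A ∩ (G.closedNeighborSet a ∪ G.closedNeighborSet b)ᶜ) :
    S.ncard ≤ (setNbhd G S ∩ (G.closedNeighborSet a ∪ G.closedNeighborSet b)ᶜ).ncard := by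
  have hSA : S ⊆ A := fun s hs => (hS hs).1
  have haS : a ∉ S := fun h => (hS h).2 (Or.inl (mem_insert a _))
  have hSb : ∀ s ∈ S, ¬ G.Adj b s := fun s hs h => (hS hs).2 (Or.inr (mem_insert_of_mem b h))
  have hsize : S.ncard + 3 ≤ A.ncard := by
    have hRA : insert a (G.neighborSet b) ⊆ A :=
      insert_subset ha (isBipartiteWith_neighborSet_subset hG.symm hb)
    have hSR : S ⊆ A \ insert a (G.neighborSet b) := by
      rintro s hs
      refine ⟨hSA hs, ?_⟩
      rintro (rfl | h)
      exacts [haS hs, hSb s hs h]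
    have h1 := ncard_le_ncard hSR
    have h2 : 3 ≤ (insert a (G.neighborSet b)).ncard :=
      hcub b ▸ ncard_le_ncard (subset_insert _ _)
    have h3 := ncard_le_ncard hRA
    rw [ncard_sdiff hRA] at h1
    omega
  have hNa : G.neighborSet a ⊆ setNbhd G (insert a S) := setNbhd_insert ▸ subset_union_left
  have hsurplus := ncard_add_two_le_ncard_setNbhd hG hbr (insert_subset ha hSA)
    (by rw [ncard_insert_of_notMem haS]; omega)
    (by have := ncard_le_ncard hNa; have := hcub a; omega)
  rw [ncard_insert_of_notMem haS, setNbhd_insert, ← union_sdiff_self] at hsurplus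
  have hrest : setNbhd G S \ G.neighborSet a ⊆
      setNbhd G S ∩ (G.closedNeighborSet a ∪ G.closedNeighborSet b)ᶜ := by
    rintro v ⟨hv, hva⟩
    refine ⟨hv, ?_⟩
    have hvB := setNbhd_subset_of_isBipartiteWith hG hSA hv
    rintro ((rfl | h) | (rfl | h))
    · exact hG.disjoint.notMem_of_mem_left ha hvB
    · exact hva h
    · obtain ⟨s, hs, hsb⟩ := hv
      exact hSb s hs hsb.symm
    · exact hG.disjoint.notMem_of_mem_left
        (isBipartiteWith_neighborSet_subset hG.symm hb h) hvB
  have hunion := ncard_union_le (G.neighborSet a) (setNbhd G S \ G.neighborSet a)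
  have := ncard_le_ncard hrest
  rw [hcub a] at hunion
  omega

theorem forall_ncard_le_ncard_setNbhd_inter [Finite V] (hG : G.IsBipartiteWith A B)
    (hAB : A ∪ B = univ) (hA : ∀ S ⊆ A ∩ Y, S.ncard ≤ (setNbhd G S ∩ Y).ncard)
    (hB : ∀ S ⊆ B ∩ Y, S.ncard ≤ (setNbhd G S ∩ Y).ncard) (hS : S ⊆ Y) :
    S.ncard ≤ (setNbhd G S ∩ Y).ncard := by
  have hdisj : Disjoint (setNbhd G (S ∩ A) ∩ Y) (setNbhd G (S ∩ B) ∩ Y) :=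
    (hG.disjoint.symm.mono (setNbhd_subset_of_isBipartiteWith hG inter_subset_right)
      (setNbhd_subset_of_isBipartiteWith hG.symm inter_subset_right)).mono
      inter_subset_left inter_subset_left
  calc S.ncard = ((S ∩ A) ∪ (S ∩ B)).ncard := by
        rw [← inter_union_distrib_left, hAB, inter_univ]
    _ ≤ (S ∩ A).ncard + (S ∩ B).ncard := ncard_union_le _ _
    _ ≤ (setNbhd G (S ∩ A) ∩ Y).ncard + (setNbhd G (S ∩ B) ∩ Y).ncard :=
      add_le_add (hA _ fun s hs => ⟨hs.2, hS hs.1⟩) (hB _ fun s hs => ⟨hs.2, hS hs.1⟩)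
    _ = ((setNbhd G (S ∩ A) ∩ Y) ∪ (setNbhd G (S ∩ B) ∩ Y)).ncard :=
      (ncard_union_eq hdisj).symm
    _ ≤ (setNbhd G S ∩ Y).ncard := ncard_le_ncard <| union_subset
      (inter_subset_inter_left _ (setNbhd_mono inter_subset_left))
      (inter_subset_inter_left _ (setNbhd_mono inter_subset_left))

theorem matchable_induce_of_forall_ncard_le [Finite V] (hG : G.IsBipartiteWith A B)
    (hY : ∀ S ⊆ Y, S.ncard ≤ (setNbhd G S ∩ Y).ncard) : Matchable (G.induce Y) := by
  classical
  have := Fintype.ofFinite V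
  have hGY : (G.induce Y).IsBipartiteWith (Subtype.val ⁻¹' A) (Subtype.val ⁻¹' B) :=
    ⟨hG.disjoint.preimage _, fun _ _ h => hG.mem_of_adj h⟩
  refine exists_isPerfectMatching_of_forall_ncard_le hGY fun s => ?_
  have himage : Subtype.val '' (⋃ x ∈ s, (G.induce Y).neighborSet x) =
      setNbhd G (Subtype.val '' s) ∩ Y := by
    ext v
    simp only [iUnion_coe_set, image_val_iUnion, mem_iUnion, mem_image, mem_neighborSet,
      comap_adj, Function.Embedding.subtype_apply, Subtype.exists, exists_and_left, exists_prop,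
      exists_eq_right_right, exists_and_right, setNbhd, exists_eq_right, mem_inter_iff,
      mem_ofPred_eq]
    constructor
    · rintro ⟨i, hadj, his, hv⟩
      exact ⟨⟨i, his, hadj⟩, hv⟩
    · rintro ⟨⟨i, his, hadj⟩, hv⟩
      exact ⟨i, hadj, his, hv⟩
  rw [← ncard_image_of_injective s Subtype.val_injective,
    ← ncard_image_of_injective _ Subtype.val_injective, himage]
  exact hY _ (Subtype.coe_image_subset Y s)

theorem isLambdaMatchablePair_of_matchable (ha : (G.neighborSet a).ncard = 3)
    (hb : (G.neighborSet b).ncard = 3) (hab : Disjoint (G.neighborSet a) (G.neighborSet b))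
    (hY : Matchable (G.induce (G.closedNeighborSet a ∪ G.closedNeighborSet b)ᶜ)) :
    IsLambdaMatchablePair G a b := by
  obtain ⟨P, hP, hPverts⟩ := hY.exists_isMatching_verts_eq_s13
  refine ⟨G.lambdaSubgraph a b P, fun _ => mem_univ _, by rwa [lambdaSubgraph_neighborSet_left],
    by rwa [lambdaSubgraph_neighborSet_right], fun u hua hub => ?_⟩
  rw [lambdaSubgraph_neighborSet_of_ne hua hub, ncard_eq_one]
  by_cases hu : u ∈ P.verts
  · have hu' : u ∉ G.closedNeighborSet a ∪ G.closedNeighborSet b := by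
      rw [hPverts] at hu; exact hu
    have hPu : G.neighborSet u ∩ {a, b} = ∅ := by
      refine eq_empty_of_forall_notMem fun v ⟨huv, hv⟩ => hu' ?_
      rcases hv with rfl | rfl
      exacts [Or.inl (mem_insert_of_mem _ huv.symm), Or.inr (mem_insert_of_mem _ huv.symm)]
    obtain ⟨w, hw, hw'⟩ := hP hu
    exact ⟨w, by rw [hPu, empty_union]; ext v; exact ⟨hw' v, fun h => h ▸ hw⟩⟩
  · have hPu : P.neighborSet u = ∅ := eq_empty_of_forall_notMem fun v h => hu (P.edge_vert h)
    rw [hPverts, notMem_compl_iff] at hu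
    rw [hPu, union_empty]
    rcases hu with (rfl | h) | (rfl | h)
    exacts [absurd rfl hua,
      ⟨a, neighborSet_inter_pair_eq_singleton h (hab.notMem_of_mem_left h)⟩, absurd rfl hub,
      ⟨b, pair_comm a b ▸ neighborSet_inter_pair_eq_singleton h (hab.notMem_of_mem_right h)⟩]

end

theorem cubic_brace_every_pair_lambdaMatchable_general {V : Type*} [Fintype V]
    (H : SimpleGraph V) (A B : Set V) (hbip : IsBipartitionOf H A B)
    (hcub : IsCubic H)
    (hbrace : ∀ a₁ ∈ A, ∀ a₂ ∈ A, ∀ b₁ ∈ B, ∀ b₂ ∈ B, a₁ ≠ a₂ → b₁ ≠ b₂ →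
      Matchable (H.induce ({a₁, a₂, b₁, b₂} : Set V)ᶜ)) :
    ∀ a ∈ A, ∀ b ∈ B, IsLambdaMatchablePair H a b := by
  intro a ha b hb
  have hG := hbip.isBipartiteWith
  have hbr : MatchableAfterDeletingPairs H A B := hbrace
  refine isLambdaMatchablePair_of_matchable (hcub a) (hcub b)
    (hG.disjoint.symm.mono (isBipartiteWith_neighborSet_subset hG ha)
      (isBipartiteWith_neighborSet_subset hG.symm hb))
    (matchable_induce_of_forall_ncard_le hG fun T hT =>
      forall_ncard_le_ncard_setNbhd_inter hG hbip.1 (fun S hS => ?_) (fun S hS => ?_) hT)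
  · exact ncard_le_ncard_setNbhd_inter_compl_closedNeighborSet hG hbr hcub ha hb hS
  · rw [union_comm] at hS ⊢
    exact ncard_le_ncard_setNbhd_inter_compl_closedNeighborSet hG.symm hbr.symm hcub hb ha hS

/-- in a cubic brace distinct from `ℂ₄` (so simple, of order at
least six, characterized as a bipartite matching covered graph with `|A| ≥ 3`
such that deleting any two vertices of each colour class leaves a matchable
graph), every pair `(a, b)` with `a ∈ A`, `b ∈ B` is λ-matchable. -/
theorem cubic_brace_every_pair_lambdaMatchable {V : Type*} [Fintype V]
    (H : SimpleGraph V) (A B : Set V) (hbip : IsBipartitionOf H A B)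
    (hcub : IsCubic H) (hmc : MatchingCovered H) (hA : 3 ≤ A.ncard)
    (hbrace : ∀ a₁ ∈ A, ∀ a₂ ∈ A, ∀ b₁ ∈ B, ∀ b₂ ∈ B, a₁ ≠ a₂ → b₁ ≠ b₂ →
      Matchable (H.induce ({a₁, a₂, b₁, b₂} : Set V)ᶜ)) :
    ∀ a ∈ A, ∀ b ∈ B, IsLambdaMatchablePair H a b :=
  cubic_brace_every_pair_lambdaMatchable_general H A B hbip hcub hbrace
end

section
/- An odd cut ∂(X) of a bipartite matching covered graph H[A,B] is tight if and only if (i) |X⁺| = |X⁻| + 1 and (ii) there is no edge with one end in X⁻ and the other end in X̄⁻. Consequently, if ∂(X) is tight then both ∂(X)-contractions are bipartite. -/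
open SimpleGraph Set

/-- `X⁺`: the larger of `X ∩ A` and `X ∩ B`. -/
noncomputable def shorePlus {V : Type*} (A B X : Set V) : Set V :=
  if (X ∩ A).ncard ≥ (X ∩ B).ncard then X ∩ A else X ∩ B

/-- `X⁻`: the smaller of `X ∩ A` and `X ∩ B`. -/
noncomputable def shoreMinus {V : Type*} (A B X : Set V) : Set V :=
  if (X ∩ A).ncard ≥ (X ∩ B).ncard then X ∩ B else X ∩ A

/-
Let `μ` be the mate map of a perfect matching `M`. Since `μ` swaps `A` and `B`, it matches the
vertices of `X ∩ A` whose mate lies in `X` bijectively with those of `X ∩ B`, so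
`|X ∩ A| - |X ∩ B| = a - b`, where `a` and `b` count the vertices of `X ∩ A` and `X ∩ B` matched
across `∂(X)`, while `|M ∩ ∂(X)| = a + b`. Tightness (`a + b = 1`) thus makes `|X ∩ A|` and
`|X ∩ B|` differ by one; if `X⁺ = X ∩ A`, then `a = b + 1` forces `b = 0` for every `M`, so no
perfect matching, and hence (every edge lying in one) no edge at all, joins `X⁻ = X ∩ B` to
`X̄⁻ = X̄ ∩ A`. Conversely, without such edges `b = 0` for every `M`, so `a + b = |X⁺| - |X⁻| = 1`.
Then each vertex of `X` with a neighbour outside `X` lies in `X⁺`, so the contraction vertex can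
join the colour class of `X⁻`.
-/

namespace SimpleGraph.Subgraph.IsPerfectMatching

variable {V : Type*} {G : SimpleGraph V} {M : G.Subgraph}

noncomputable def mate (hM : M.IsPerfectMatching) (v : V) : V :=
  (hM.1 (hM.2 v)).choose

lemma adj_mate (hM : M.IsPerfectMatching) (v : V) : M.Adj v (hM.mate v) :=
  (hM.1 (hM.2 v)).choose_spec.1

lemma mate_eq_of_adj (hM : M.IsPerfectMatching) {v w : V} (h : M.Adj v w) : hM.mate v = w :=
  ((hM.1 (hM.2 v)).choose_spec.2 w h).symm

lemma mate_involutive (hM : M.IsPerfectMatching) : Function.Involutive hM.mate :=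
  fun v => hM.mate_eq_of_adj (hM.adj_mate v).symm

lemma ncard_preimage_mate (hM : M.IsPerfectMatching) (S : Set V) :
    (hM.mate ⁻¹' S).ncard = S.ncard :=
  ncard_preimage_of_injective_subset_range hM.mate_involutive.injective
    (by simp [hM.mate_involutive.surjective.range_eq])

lemma ncard_edgeSet_inter_cutEdges (hM : M.IsPerfectMatching) (X : Set V) :
    (M.edgeSet ∩ cutEdges G X).ncard = (X \ hM.mate ⁻¹' X).ncard := by
  have himage : M.edgeSet ∩ cutEdges G X = (fun u => s(u, hM.mate u)) '' (X \ hM.mate ⁻¹' X) := by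
    ext e
    constructor
    · rintro ⟨heM, -, u, v, rfl, hu, hv⟩
      have hmate := hM.mate_eq_of_adj heM
      exact ⟨u, ⟨hu, by simpa [hmate]⟩, by simp [hmate]⟩
    · rintro ⟨u, ⟨hu, hmu⟩, rfl⟩
      exact ⟨hM.adj_mate u, M.adj_sub (hM.adj_mate u), u, _, rfl, hu, hmu⟩
  rw [himage]
  refine InjOn.ncard_image fun u hu u' hu' huu' => ?_
  rcases Sym2.eq_iff.mp huu' with ⟨h, -⟩ | ⟨h, -⟩
  · exact h
  · exact (hu'.2 (show hM.mate u' ∈ X from h ▸ hu.1)).elim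

end SimpleGraph.Subgraph.IsPerfectMatching

lemma ncard_inter_add_ncard_compl_inter {V : Type*} [Finite V] (X S : Set V) :
    (X ∩ S).ncard + (Xᶜ ∩ S).ncard = S.ncard := by
  rw [inter_comm X, inter_comm Xᶜ, ← sdiff_eq, ncard_inter_add_ncard_sdiff_eq_ncard]

namespace IsBipartitionOf

variable {V : Type*} {G : SimpleGraph V} {A B : Set V} {M : G.Subgraph}

lemma symm (h : IsBipartitionOf G A B) : IsBipartitionOf G B A :=
  ⟨union_comm A B ▸ h.1, h.2.1.symm, fun u v huv => (h.2.2 u v huv).symm⟩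

lemma right_eq_compl (h : IsBipartitionOf G A B) : B = Aᶜ :=
  eq_compl_iff_isCompl.2 ⟨h.2.1.symm, codisjoint_iff.2 (by rw [sup_comm]; exact h.1)⟩

lemma mem_right_of_adj_s14 (h : IsBipartitionOf G A B) {u v : V} (hu : u ∈ A) (huv : G.Adj u v) :
    v ∈ B :=
  (h.2.2 u v huv).elim And.right fun ⟨hu', _⟩ => (disjoint_left.1 h.2.1 hu hu').elim

lemma ncard_eq_inter_add_inter [Finite V] (h : IsBipartitionOf G A B) (S : Set V) :
    S.ncard = (S ∩ A).ncard + (S ∩ B).ncard := by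
  rw [h.right_eq_compl, ← sdiff_eq, ncard_inter_add_ncard_sdiff_eq_ncard]

lemma preimage_mate (h : IsBipartitionOf G A B) (hM : M.IsPerfectMatching) :
    hM.mate ⁻¹' A = B := by
  ext v
  have hadj := M.adj_sub (hM.adj_mate v)
  exact ⟨fun hv => h.mem_right_of_adj_s14 hv hadj.symm, fun hv => h.symm.mem_right_of_adj_s14 hv hadj⟩

lemma ncard_eq (h : IsBipartitionOf G A B) (hM : M.IsPerfectMatching) : A.ncard = B.ncard := by
  rw [← h.preimage_mate hM, hM.ncard_preimage_mate]

lemma ncard_inter_add_ncard_inter_sdiff_preimage_mate [Finite V] (h : IsBipartitionOf G A B)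
    (hM : M.IsPerfectMatching) (X : Set V) :
    (X ∩ A).ncard + ((X ∩ B) \ hM.mate ⁻¹' X).ncard
      = (X ∩ B).ncard + ((X ∩ A) \ hM.mate ⁻¹' X).ncard := by
  have hinside : (X ∩ A ∩ hM.mate ⁻¹' X).ncard = (X ∩ B ∩ hM.mate ⁻¹' X).ncard := by
    rw [← hM.ncard_preimage_mate (X ∩ A ∩ _), preimage_inter, preimage_inter, h.preimage_mate hM,
      hM.mate_involutive.preimage]
    congr 1
    ac_rfl
  have hA := ncard_inter_add_ncard_sdiff_eq_ncard (X ∩ A) (hM.mate ⁻¹' X)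
  have hB := ncard_inter_add_ncard_sdiff_eq_ncard (X ∩ B) (hM.mate ⁻¹' X)
  omega

lemma ncard_edgeSet_inter_cutEdges_eq_add [Finite V] (h : IsBipartitionOf G A B)
    (hM : M.IsPerfectMatching) (X : Set V) :
    (M.edgeSet ∩ cutEdges G X).ncard
      = ((X ∩ A) \ hM.mate ⁻¹' X).ncard + ((X ∩ B) \ hM.mate ⁻¹' X).ncard := by
  rw [hM.ncard_edgeSet_inter_cutEdges, h.ncard_eq_inter_add_inter, inter_sdiff_right_comm,
    inter_sdiff_right_comm]

end IsBipartitionOf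

lemma MatchingCovered.exists_isPerfectMatching {V : Type*} {G : SimpleGraph V}
    (h : MatchingCovered G) : ∃ M : G.Subgraph, M.IsPerfectMatching := by
  obtain ⟨hconn, hcard, hcover⟩ := h
  have : Finite V := Nat.finite_of_card_ne_zero (by omega)
  have : Nontrivial V := Finite.one_lt_card_iff_nontrivial.1 hcard
  obtain ⟨v⟩ := hconn.nonempty
  obtain ⟨w, hvw⟩ := hconn.preconnected.exists_adj_of_nontrivial v
  obtain ⟨M, hM, -⟩ := hcover s(v, w) hvw
  exact ⟨M, hM⟩

/-- Conditions (i) and (ii) for a shore `X` with `X⁺ = X ∩ A`. -/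
def TightShore {V : Type*} (G : SimpleGraph V) (A B X : Set V) : Prop :=
  (X ∩ A).ncard = (X ∩ B).ncard + 1 ∧ ∀ u ∈ X ∩ B, ∀ w ∈ Xᶜ ∩ A, ¬ G.Adj u w

section TightCut

variable {V : Type*} [Finite V] {G : SimpleGraph V} {A B X : Set V}

lemma TightShore.isTightCut (hbip : IsBipartitionOf G A B) (h : TightShore G A B X) :
    IsTightCut G X := by
  intro M hM
  have hB : (X ∩ B) \ hM.mate ⁻¹' X = ∅ := by
    refine eq_empty_of_forall_notMem ?_
    rintro u ⟨hu, hmu⟩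
    have hadj := M.adj_sub (hM.adj_mate u)
    exact h.2 u hu _ ⟨hmu, hbip.symm.mem_right_of_adj_s14 hu.2 hadj⟩ hadj
  have hbalance := hbip.ncard_inter_add_ncard_inter_sdiff_preimage_mate hM X
  have hcard := h.1
  rw [hbip.ncard_edgeSet_inter_cutEdges_eq_add hM X, hB, ncard_empty]
  rw [hB, ncard_empty] at hbalance
  omega

lemma TightShore.compl (h : TightShore G A B X) (hAB : A.ncard = B.ncard) :
    TightShore G B A Xᶜ := by
  refine ⟨?_, fun u hu w hw huw => h.2 w (by simpa using hw) u hu huw.symm⟩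
  have hA := ncard_inter_add_ncard_compl_inter X A
  have hB := ncard_inter_add_ncard_compl_inter X B
  have hcard := h.1
  omega

lemma IsTightCut.ncard_inter_eq_or (hbip : IsBipartitionOf G A B) (ht : IsTightCut G X)
    {M : G.Subgraph} (hM : M.IsPerfectMatching) :
    (X ∩ A).ncard = (X ∩ B).ncard + 1 ∨ (X ∩ B).ncard = (X ∩ A).ncard + 1 := by
  have hcut := ht M hM
  have hbalance := hbip.ncard_inter_add_ncard_inter_sdiff_preimage_mate hM X
  rw [hbip.ncard_edgeSet_inter_cutEdges_eq_add hM X] at hcut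
  omega

lemma IsTightCut.not_adj (hbip : IsBipartitionOf G A B) (hmc : MatchingCovered G)
    (ht : IsTightCut G X) (hX : (X ∩ A).ncard = (X ∩ B).ncard + 1) :
    ∀ u ∈ X ∩ B, ∀ w ∈ Xᶜ ∩ A, ¬ G.Adj u w := by
  intro u hu w hw huw
  obtain ⟨M, hM, huwM⟩ := hmc.2.2 s(u, w) huw
  have hmu : hM.mate u = w := hM.mate_eq_of_adj huwM
  have hcrossing : ((X ∩ B) \ hM.mate ⁻¹' X).Nonempty := ⟨u, hu, by simpa [hmu] using hw.1⟩
  have hpos := hcrossing.ncard_pos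
  have hcut := ht M hM
  have hbalance := hbip.ncard_inter_add_ncard_inter_sdiff_preimage_mate hM X
  rw [hbip.ncard_edgeSet_inter_cutEdges_eq_add hM X] at hcut
  omega

lemma isTightCut_iff_tightShore (hbip : IsBipartitionOf G A B) (hmc : MatchingCovered G) :
    IsTightCut G X ↔ TightShore G A B X ∨ TightShore G B A X := by
  refine ⟨fun ht => ?_, ?_⟩
  · obtain ⟨M, hM⟩ := hmc.exists_isPerfectMatching
    rcases ht.ncard_inter_eq_or hbip hM with h | h
    · exact Or.inl ⟨h, ht.not_adj hbip hmc h⟩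
    · exact Or.inr ⟨h, ht.not_adj hbip.symm hmc h⟩
  · rintro (h | h)
    · exact h.isTightCut hbip
    · exact h.isTightCut hbip.symm

end TightCut

section Shore

variable {V : Type*} {A B X : Set V}

lemma shorePlus_of_le (h : (X ∩ B).ncard ≤ (X ∩ A).ncard) : shorePlus A B X = X ∩ A := if_pos h

lemma shoreMinus_of_le (h : (X ∩ B).ncard ≤ (X ∩ A).ncard) : shoreMinus A B X = X ∩ B := if_pos h

lemma shorePlus_of_lt (h : (X ∩ A).ncard < (X ∩ B).ncard) : shorePlus A B X = X ∩ B :=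
  if_neg h.not_ge

lemma shoreMinus_of_lt (h : (X ∩ A).ncard < (X ∩ B).ncard) : shoreMinus A B X = X ∩ A :=
  if_neg h.not_ge

lemma shore_conditions_iff_tightShore [Finite V] {G : SimpleGraph V} (hAB : A.ncard = B.ncard) :
    ((shorePlus A B X).ncard = (shoreMinus A B X).ncard + 1 ∧
        ∀ u ∈ shoreMinus A B X, ∀ w ∈ shoreMinus A B Xᶜ, ¬ G.Adj u w) ↔
      TightShore G A B X ∨ TightShore G B A X := by
  have hA := ncard_inter_add_ncard_compl_inter X A
  have hB := ncard_inter_add_ncard_compl_inter X B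
  rcases le_or_gt (X ∩ B).ncard (X ∩ A).ncard with h | h
  · rw [shorePlus_of_le h, shoreMinus_of_le h]
    constructor
    · rintro ⟨hcard, hno⟩
      rw [shoreMinus_of_lt (by omega)] at hno
      exact Or.inl ⟨hcard, hno⟩
    · rintro (⟨hcard, hno⟩ | ⟨hcard, -⟩)
      · rw [shoreMinus_of_lt (by omega)]
        exact ⟨hcard, hno⟩
      · omega
  · rw [shorePlus_of_lt h, shoreMinus_of_lt h]
    constructor
    · rintro ⟨hcard, hno⟩
      rw [shoreMinus_of_le (by omega)] at hno
      exact Or.inr ⟨hcard, hno⟩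
    · rintro (⟨hcard, -⟩ | ⟨hcard, hno⟩)
      · omega
      · rw [shoreMinus_of_le (by omega)]
        exact ⟨hcard, hno⟩

end Shore

lemma isBipartitionOf_contractOut {V : Type*} {G : SimpleGraph V} {A B X : Set V}
    (hbip : IsBipartitionOf G A B) (hno : ∀ u ∈ X ∩ B, ∀ w ∈ Xᶜ ∩ A, ¬ G.Adj u w) :
    IsBipartitionOf (contractOut G X) (some '' (Subtype.val ⁻¹' A))
      (some '' (Subtype.val ⁻¹' A))ᶜ := by
  refine ⟨union_compl_self _, disjoint_compl_right, ?_⟩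
  have hboundary : ∀ a : X, (∃ w ∉ X, G.Adj a w) → (a : V) ∈ A := fun a ⟨w, hw, haw⟩ =>
    (hbip.2.2 _ _ haw).elim And.left fun ⟨ha, hw'⟩ => (hno a ⟨a.2, ha⟩ w ⟨hw, hw'⟩ haw).elim
  rintro (_ | a) (_ | b) hadj
  · exact (hadj.ne rfl).elim
  all_goals simp only [contractOut, fromRel_adj, ne_eq, reduceCtorEq, not_false_eq_true, false_or,
    or_false, true_and, false_and, and_true, and_false, mem_image, mem_preimage, mem_compl_iff,
    Option.some.injEq, exists_eq_right, exists_false] at hadj ⊢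
  · exact hboundary b hadj
  · exact hboundary a hadj
  · simpa only [hbip.right_eq_compl, mem_compl_iff] using hbip.2.2 a b (hadj.2.elim id Adj.symm)

theorem tight_cut_characterization_bipartite_general {V : Type*} [Fintype V]
    (H : SimpleGraph V) (A B : Set V) (hbip : IsBipartitionOf H A B)
    (hmc : MatchingCovered H) (X : Set V) :
    (IsTightCut H X ↔
      ((shorePlus A B X).ncard = (shoreMinus A B X).ncard + 1 ∧
        ∀ u ∈ shoreMinus A B X, ∀ w ∈ shoreMinus A B Xᶜ, ¬ H.Adj u w)) ∧
    (IsTightCut H X →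
      (∃ A₁ B₁ : Set (Option ↥X), IsBipartitionOf (contractOut H X) A₁ B₁) ∧
      (∃ A₂ B₂ : Set (Option ↥Xᶜ), IsBipartitionOf (contractOut H Xᶜ) A₂ B₂)) := by
  obtain ⟨M, hM⟩ := hmc.exists_isPerfectMatching
  have hAB := hbip.ncard_eq hM
  have htight : IsTightCut H X ↔ TightShore H A B X ∨ TightShore H B A X :=
    isTightCut_iff_tightShore hbip hmc
  refine ⟨htight.trans (shore_conditions_iff_tightShore hAB).symm, fun ht => ?_⟩
  rcases htight.1 ht with h | h
  · exact ⟨⟨_, _, isBipartitionOf_contractOut hbip h.2⟩,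
      ⟨_, _, isBipartitionOf_contractOut hbip.symm (h.compl hAB).2⟩⟩
  · exact ⟨⟨_, _, isBipartitionOf_contractOut hbip.symm h.2⟩,
      ⟨_, _, isBipartitionOf_contractOut hbip (h.compl hAB.symm).2⟩⟩

/-- an odd cut `∂(X)` of a bipartite matching covered graph
`H[A,B]` is tight iff `|X⁺| = |X⁻| + 1` and there is no edge joining `X⁻` and
`X̄⁻`; consequently, if `∂(X)` is tight then both contractions are bipartite. -/
theorem tight_cut_characterization_bipartite {V : Type*} [Fintype V]
    (H : SimpleGraph V) (A B : Set V) (hbip : IsBipartitionOf H A B)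
    (hmc : MatchingCovered H) (X : Set V) (hodd : Odd X.ncard) :
    (IsTightCut H X ↔
      ((shorePlus A B X).ncard = (shoreMinus A B X).ncard + 1 ∧
        ∀ u ∈ shoreMinus A B X, ∀ w ∈ shoreMinus A B Xᶜ, ¬ H.Adj u w)) ∧
    (IsTightCut H X →
      (∃ A₁ B₁ : Set (Option ↥X), IsBipartitionOf (contractOut H X) A₁ B₁) ∧
      (∃ A₂ B₂ : Set (Option ↥Xᶜ), IsBipartitionOf (contractOut H Xᶜ) A₂ B₂)) :=
  tight_cut_characterization_bipartite_general H A B hbip hmc X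
end

section
/- Let ∂(X) be a tight cut of a connected bipartite cubic graph H[A,B] with X⁺ ⊆ B. Then for every a ∈ X⁻ and b ∈ X̄⁻, the pair (a,b) is not λ-matchable in H; that is, H has no spanning subgraph in which a and b have degree 3 and every other vertex has degree 1. -/
/-!
Count the darts of a spanning subgraph `F` of the bipartite graph `H` leaving `X`: since the
edges inside `X` join `X ∩ A` to `X ∩ B`, the degree sum over `X ∩ A` plus the number of
`F`-edges from `X ∩ B` to `Xᶜ` equals the degree sum over `X ∩ B` plus the number of `F`-edges
from `X ∩ A` to `Xᶜ`. For a perfect matching tightness makes the two crossing numbers sum to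
one, so `|X ∩ B| = |X ∩ A| + 1` and no matching edge leaves `X` from `X ∩ A`. For an
`(a, b)`-matching the degree sums over `X ∩ A` and `X ∩ B` are `|X ∩ A| + 2` and `|X ∩ B|`,
so one of its edges leaves `X` from `X ∩ A`. That edge lies in a perfect matching, as every
edge of a regular bipartite graph does (Hall's theorem, applied after removing one perfect
matching at a time): a contradiction.
-/

open SimpleGraph Set

open Finset

namespace SimpleGraph

variable {V : Type*} {G : SimpleGraph V} {A B : Set V}

lemma IsBipartiteWith.mono {G' : SimpleGraph V} (hG : G.IsBipartiteWith A B) (hle : G' ≤ G) :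
    G'.IsBipartiteWith A B :=
  ⟨hG.disjoint, fun _ _ h => hG.mem_of_adj (hle h)⟩

lemma IsBipartiteWith.notMem_of_adj (hG : G.IsBipartiteWith A B) {S : Set V} (hS : S ⊆ A)
    {x y : V} (hx : x ∈ S) (hxy : G.Adj x y) : y ∉ S := fun hy =>
  Set.disjoint_left.mp hG.disjoint (hS hy) (hG.mem_of_mem_adj (hS hx) hxy)

@[simp]
lemma Subgraph.neighborSet_spanningCoe (F : G.Subgraph) (v : V) :
    F.spanningCoe.neighborSet v = F.neighborSet v :=
  rfl

lemma Subgraph.IsPerfectMatching.ncard_neighborSet_deleteEdges {M : G.Subgraph}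
    (hM : M.IsPerfectMatching) (v : V) :
    ((G.deleteEdges M.edgeSet).neighborSet v).ncard = (G.neighborSet v).ncard - 1 := by
  obtain ⟨w, hvw, hw⟩ := Subgraph.isPerfectMatching_iff.mp hM v
  have : (G.deleteEdges M.edgeSet).neighborSet v = G.neighborSet v \ {w} := by
    ext x
    rw [SimpleGraph.mem_neighborSet, SimpleGraph.deleteEdges_adj, Subgraph.mem_edgeSet,
      Set.mem_sdiff, Set.mem_singleton_iff]
    exact and_congr_right fun _ => ⟨fun h hx => h (hx ▸ hvw), fun h hx => h (hw x hx)⟩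
  rw [this, Set.ncard_sdiff_singleton_of_mem (show w ∈ G.neighborSet v from hvw.adj_sub)]

section Interedges

variable [DecidableRel G.Adj]

lemma sum_ncard_neighborSet_eq_card_interedges {s t : Finset V}
    (h : ∀ x ∈ s, ∀ y, G.Adj x y → y ∈ t) :
    ∑ x ∈ s, (G.neighborSet x).ncard = #(G.interedges s t) := by
  rw [interedges_def, card_filter, sum_product]
  refine sum_congr rfl fun x hx => ?_
  rw [← card_filter, ← Set.ncard_coe_finset, coe_filter]
  congr 1
  ext y
  exact ⟨fun hy => ⟨h x hx y hy, hy⟩, And.right⟩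

lemma card_interedges_comm (s t : Finset V) : #(G.interedges s t) = #(G.interedges t s) :=
  have := G.symm
  Rel.card_interedges_comm s t

variable [DecidableEq V]

lemma card_interedges_union_left {s s' t : Finset V} (hs : Disjoint s s') :
    #(G.interedges (s ∪ s') t) = #(G.interedges s t) + #(G.interedges s' t) := by
  rw [← card_union_of_disjoint (interedges_disjoint_left G hs t), interedges_def,
    interedges_def, interedges_def, union_product, filter_union]

lemma card_interedges_union_right {s t t' : Finset V} (ht : Disjoint t t') :
    #(G.interedges s (t ∪ t')) = #(G.interedges s t) + #(G.interedges s t') := by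
  rw [← card_union_of_disjoint (interedges_disjoint_right G s ht), interedges_def,
    interedges_def, interedges_def, product_union, filter_union]

variable [Fintype V]

lemma IsBipartiteWith.sum_ncard_neighborSet_add_card_interedges_compl
    (hG : G.IsBipartiteWith A B) {P Q : Finset V} (hP : ↑P ⊆ A) (hQ : ↑Q ⊆ B) :
    ∑ x ∈ P, (G.neighborSet x).ncard + #(G.interedges Q (P ∪ Q)ᶜ) =
      ∑ x ∈ Q, (G.neighborSet x).ncard + #(G.interedges P (P ∪ Q)ᶜ) := by
  have hPn : ∀ x ∈ P, ∀ y, G.Adj x y → y ∈ Q ∪ (P ∪ Q)ᶜ := fun x hx y hxy => by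
    have := hG.notMem_of_adj hP (Finset.mem_coe.mpr hx) hxy
    simp only [Finset.mem_coe] at this
    simp [this, em]
  have hQn : ∀ x ∈ Q, ∀ y, G.Adj x y → y ∈ P ∪ (P ∪ Q)ᶜ := fun x hx y hxy => by
    have := hG.symm.notMem_of_adj hQ (Finset.mem_coe.mpr hx) hxy
    simp only [Finset.mem_coe] at this
    simp [this, em]
  rw [sum_ncard_neighborSet_eq_card_interedges hPn, sum_ncard_neighborSet_eq_card_interedges hQn,
    card_interedges_union_right (_root_.disjoint_compl_right_iff.mpr Finset.subset_union_right),
    card_interedges_union_right (_root_.disjoint_compl_right_iff.mpr Finset.subset_union_left),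
    card_interedges_comm P Q]
  ring

end Interedges

section Regular

variable [Fintype V] {k : ℕ}

lemma ncard_le_ncard_iUnion_neighborSet_of_regular (hk : 0 < k)
    (hreg : ∀ v, (G.neighborSet v).ncard = k) (s : Set V) :
    s.ncard ≤ (⋃ x ∈ s, G.neighborSet x).ncard := by
  classical
  set t := ⋃ x ∈ s, G.neighborSet x
  have hdc : #s.toFinset * k ≤ #t.toFinset * k := by
    refine card_mul_le_card_mul G.Adj (fun x hx => ?_) (fun y _ => ?_)
    · rw [← hreg x, ← Set.ncard_coe_finset, coe_bipartiteAbove]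
      refine Set.ncard_le_ncard (fun y hy => ⟨?_, hy⟩)
      exact Set.mem_toFinset.mpr (Set.mem_biUnion (Set.mem_toFinset.mp hx) hy)
    · rw [← hreg y, ← Set.ncard_coe_finset, coe_bipartiteBelow]
      exact Set.ncard_le_ncard (fun x hx => hx.2.symm)
  rw [Set.ncard_eq_toFinset_card', Set.ncard_eq_toFinset_card']
  exact Nat.le_of_mul_le_mul_right hdc hk

lemma IsBipartiteWith.exists_isPerfectMatching_of_regular (hG : G.IsBipartiteWith A B)
    (hk : 0 < k) (hreg : ∀ v, (G.neighborSet v).ncard = k) :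
    ∃ M : G.Subgraph, M.IsPerfectMatching := by
  classical
  exact exists_isPerfectMatching_of_forall_ncard_le hG
    (ncard_le_ncard_iUnion_neighborSet_of_regular hk hreg)

theorem IsBipartiteWith.exists_isPerfectMatching_adj_of_regular (hG : G.IsBipartiteWith A B)
    (hreg : ∀ v, (G.neighborSet v).ncard = k) {x y : V} (hxy : G.Adj x y) :
    ∃ M : G.Subgraph, M.IsPerfectMatching ∧ M.Adj x y := by
  induction k generalizing G with
  | zero => exact absurd (hreg x) ((Set.ncard_pos).mpr ⟨y, hxy⟩).ne'
  | succ k ih =>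
    obtain ⟨M, hM⟩ := hG.exists_isPerfectMatching_of_regular k.succ_pos hreg
    by_cases hMxy : M.Adj x y
    · exact ⟨M, hM, hMxy⟩
    have hle : G.deleteEdges M.edgeSet ≤ G := deleteEdges_le _
    obtain ⟨N, hN, hNxy⟩ := ih (hG.mono hle)
      (fun v => by rw [hM.ncard_neighborSet_deleteEdges, hreg, Nat.add_sub_cancel])
      (deleteEdges_adj.mpr ⟨hxy, hMxy⟩)
    refine ⟨G.toSubgraph N.spanningCoe (N.spanningCoe_le.trans hle), ?_, hNxy⟩
    rwa [Subgraph.IsPerfectMatching.toSubgraph_iff]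

end Regular

end SimpleGraph

lemma IsBipartitionOf.isBipartiteWith_s15 {V : Type*} {H : SimpleGraph V} {A B : Set V}
    (h : IsBipartitionOf H A B) : H.IsBipartiteWith A B :=
  ⟨h.2.1, fun u v => h.2.2 u v⟩

section TightCut

variable {V : Type*} [Fintype V] [DecidableEq V] {H : SimpleGraph V} {A B : Set V}

lemma ncard_edgeSet_inter_cutEdges_eq_card_interedges (F : H.Subgraph)
    [DecidableRel F.spanningCoe.Adj] (X : Finset V) :
    (F.edgeSet ∩ cutEdges H ↑X).ncard = #(F.spanningCoe.interedges X Xᶜ) := by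
  have hinj : Set.InjOn (fun p : V × V => s(p.1, p.2)) ↑(F.spanningCoe.interedges X Xᶜ) := by
    rintro ⟨u, v⟩ huv ⟨u', v'⟩ huv' heq
    simp only [Finset.mem_coe, mk_mem_interedges_iff, Finset.mem_compl] at huv huv'
    rcases Sym2.eq_iff.mp heq with ⟨rfl, rfl⟩ | ⟨rfl, rfl⟩
    · rfl
    · exact absurd huv.1 huv'.2.1
  rw [← Set.ncard_coe_finset, ← hinj.ncard_image]
  congr 1
  ext e
  constructor
  · rintro ⟨he, -, u, v, rfl, hu, hv⟩
    exact ⟨(u, v), by simpa [mk_mem_interedges_iff] using ⟨hu, hv, he⟩, rfl⟩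
  · rintro ⟨⟨u, v⟩, huv, rfl⟩
    simp only [Finset.mem_coe, mk_mem_interedges_iff, Finset.mem_compl] at huv
    exact ⟨huv.2.2, huv.2.2.adj_sub, u, v, rfl, huv.1, huv.2.1⟩

variable {P Q : Finset V}

lemma IsTightCut.adj_mem_and_card_eq_of_isPerfectMatching (htight : IsTightCut H ↑(P ∪ Q))
    (hG : H.IsBipartiteWith A B) (hP : ↑P ⊆ A) (hQ : ↑Q ⊆ B) (hlt : #P < #Q)
    {N : H.Subgraph} (hN : N.IsPerfectMatching) :
    (∀ u v, N.Adj u v → u ∈ P → v ∈ P ∪ Q) ∧ #Q = #P + 1 := by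
  classical
  have hPQ : Disjoint P Q := Finset.disjoint_coe.mp (hG.disjoint.mono hP hQ)
  have hdeg : ∀ x, (N.spanningCoe.neighborSet x).ncard = 1 := fun x => by
    obtain ⟨w, hw, huniq⟩ := Subgraph.isPerfectMatching_iff.mp hN x
    exact Set.ncard_eq_one.mpr ⟨w, Set.ext fun y => ⟨huniq y, fun h => h ▸ hw⟩⟩
  have hbal := (hG.mono N.spanningCoe_le).sum_ncard_neighborSet_add_card_interedges_compl hP hQ
  simp only [hdeg, sum_const, smul_eq_mul, mul_one] at hbal
  have hcut := htight N hN
  rw [ncard_edgeSet_inter_cutEdges_eq_card_interedges, card_interedges_union_left hPQ] at hcut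
  have hout : N.spanningCoe.interedges P (P ∪ Q)ᶜ = ∅ := card_eq_zero.mp (by omega)
  refine ⟨fun u v huv hu => ?_, by omega⟩
  by_contra hv
  exact (Finset.eq_empty_iff_forall_notMem.mp hout) (u, v)
    ((mk_mem_interedges_iff _).mpr ⟨hu, Finset.mem_compl.mpr hv, huv⟩)

lemma exists_adj_mem_notMem_of_card_lt (hG : H.IsBipartiteWith A B) (hP : ↑P ⊆ A)
    (hQ : ↑Q ⊆ B) {F : H.Subgraph} {a : V} (ha : a ∈ P) (hFa : (F.neighborSet a).ncard = 3)
    (hF : ∀ x ∈ P ∪ Q, x ≠ a → (F.neighborSet x).ncard = 1) (hlt : #Q < #P + 2) :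
    ∃ u v, F.Adj u v ∧ u ∈ P ∧ v ∉ P ∪ Q := by
  classical
  have hPQ : Disjoint P Q := Finset.disjoint_coe.mp (hG.disjoint.mono hP hQ)
  have hsumP : ∑ x ∈ P, (F.spanningCoe.neighborSet x).ncard = #P + 2 := by
    simp only [Subgraph.neighborSet_spanningCoe]
    rw [← add_sum_erase P _ ha, hFa, sum_congr rfl fun x hx =>
      hF x (mem_union_left Q (mem_of_mem_erase hx)) (ne_of_mem_erase hx)]
    simp only [sum_const, card_erase_of_mem ha, smul_eq_mul, mul_one]
    have := card_pos.mpr ⟨a, ha⟩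
    omega
  have hsumQ : ∑ x ∈ Q, (F.spanningCoe.neighborSet x).ncard = #Q := by
    simp only [Subgraph.neighborSet_spanningCoe]
    rw [sum_congr rfl fun x hx =>
      hF x (mem_union_right P hx) (fun h => disjoint_left.mp hPQ (h ▸ ha) hx)]
    simp
  have hbal := (hG.mono F.spanningCoe_le).sum_ncard_neighborSet_add_card_interedges_compl hP hQ
  by_contra! hno
  have hout : F.spanningCoe.interedges P (P ∪ Q)ᶜ = ∅ :=
    Finset.eq_empty_iff_forall_notMem.mpr fun ⟨u, v⟩ huv => by
      rw [mk_mem_interedges_iff, Finset.mem_compl] at huv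
      exact huv.2.1 (hno u v huv.2.2 huv.1)
  rw [hsumP, hsumQ, hout, Finset.card_empty] at hbal
  omega

end TightCut

theorem tight_cut_pair_not_lambdaMatchable_general {V : Type*} [Fintype V]
    (H : SimpleGraph V) (A B : Set V) (hbip : IsBipartitionOf H A B)
    (hcub : IsCubic H)
    (X : Set V) (htight : IsTightCut H X)
    (hplus : (X ∩ A).ncard < (X ∩ B).ncard) :
    ∀ a ∈ X ∩ A, ∀ b ∈ Xᶜ ∩ B, ¬ IsLambdaMatchablePair H a b := by
  classical
  rintro a haXA b ⟨hbX, -⟩ ⟨M, -, hMa, -, hMdeg⟩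
  have hH := hbip.isBipartiteWith_s15
  set P := (X ∩ A).toFinset
  set Q := (X ∩ B).toFinset
  have hX : X = ↑(P ∪ Q) := by
    rw [Finset.coe_union, Set.coe_toFinset, Set.coe_toFinset, ← Set.inter_union_distrib_left,
      hbip.1, Set.inter_univ]
  have hP : ↑P ⊆ A := by simp [P]
  have hQ : ↑Q ⊆ B := by simp [Q]
  rw [hX] at htight hbX
  rw [Set.ncard_eq_toFinset_card', Set.ncard_eq_toFinset_card'] at hplus
  obtain ⟨N₀, hN₀⟩ := hH.exists_isPerfectMatching_of_regular three_pos hcub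
  have hcard := (htight.adj_mem_and_card_eq_of_isPerfectMatching hH hP hQ hplus hN₀).2
  obtain ⟨u, v, huv, hu, hv⟩ := exists_adj_mem_notMem_of_card_lt hH hP hQ
    (Set.mem_toFinset.mpr haXA) hMa
    (fun x hx hxa => hMdeg x hxa (by rintro rfl; exact hbX hx)) (by omega)
  obtain ⟨N, hN, hNuv⟩ := hH.exists_isPerfectMatching_adj_of_regular hcub huv.adj_sub
  exact hv ((htight.adj_mem_and_card_eq_of_isPerfectMatching hH hP hQ hplus hN).1 u v hNuv hu)

/-- for a tight cut `∂(X)` of a connected bipartite cubic graph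
`H[A,B]` with `X⁺ ⊆ B` (i.e. the `B`-side of `X` is the larger one, so that
`X⁻ = X ∩ A` and `X̄⁻ = X̄ ∩ B`), no pair `(a, b)` with `a ∈ X⁻`, `b ∈ X̄⁻` is
λ-matchable in `H`. -/
theorem tight_cut_pair_not_lambdaMatchable {V : Type*} [Fintype V]
    (H : SimpleGraph V) (A B : Set V) (hbip : IsBipartitionOf H A B)
    (hconn : H.Connected) (hcub : IsCubic H)
    (X : Set V) (htight : IsTightCut H X)
    (hplus : (X ∩ A).ncard < (X ∩ B).ncard) :
    ∀ a ∈ X ∩ A, ∀ b ∈ Xᶜ ∩ B, ¬ IsLambdaMatchablePair H a b :=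
  tight_cut_pair_not_lambdaMatchable_general H A B hbip hcub X htight hplus
end
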